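/- arXiv:2501.11467 — 9 statements merged into one kernel-verified Lean document; each statement's English description precedes it below -/
import Mathlib

section
/- For a finite MDP with target set T, the distance operator D^opt on (ℕ∞)^S, defined by D^opt(r)(s) = 0 for s ∈ T and D^opt(r)(s) = 1 + opt_{a ∈ A(s)} min_{s' ∈ Post(s,a)} r(s') for s ∉ T, has a unique fixed point (for opt ∈ {min, max}). -/
open scoped ENNReal
open Classical

noncomputable section

/-- Optimization direction: `dmin` for minimization, `dmax` for maximization. -/
inductive ODir | dmin | dmax

namespace ODir

/-- Apply the optimization direction to a set in a complete lattice. -/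
def run {α : Type*} [CompleteLattice α] : ODir → Set α → α
  | dmin => sInf
  | dmax => sSup

/-- The dual optimization direction: ¬min = max, ¬max = min. -/
def neg : ODir → ODir
  | dmin => dmax
  | dmax => dmin

end ODir

/-- A finite Markov decision process with states `S` and actions `A`:
a transition probability function `P` such that for each state and action the
probabilities sum to `1` or `0`, and every state has at least one enabled action. -/
structure CertMDP (S A : Type) [Fintype S] [Fintype A] where
  P : S → A → S → ℝ≥0∞
  sum_P : ∀ s a, (∑ s' : S, P s a s') = 1 ∨ (∑ s' : S, P s a s') = 0
  exists_enabled : ∀ s, ∃ a, (∑ s' : S, P s a s') = 1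

namespace CertMDP

variable {S A : Type} [Fintype S] [Fintype A]

/-- The set of actions enabled in state `s`. -/
def enabled (M : CertMDP S A) (s : S) : Set A := {a | (∑ s' : S, M.P s a s') = 1}

/-- The `a`-successors of `s`. -/
def Post (M : CertMDP S A) (s : S) (a : A) : Set S := {s' | M.P s a s' ≠ 0}

/-- Memoryless deterministic strategies. -/
def Strat (M : CertMDP S A) := {σ : S → A // ∀ s, σ s ∈ M.enabled s}

/-- Step-bounded reachability probability of `T` in the Markov chain induced by `σ`. -/
def prBounded (M : CertMDP S A) (σ : M.Strat) (T : Set S) : ℕ → S → ℝ≥0∞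
  | 0, s => if s ∈ T then 1 else 0
  | n + 1, s => if s ∈ T then 1 else ∑ s' : S, M.P s (σ.1 s) s' * prBounded M σ T n s'

/-- Reachability probability of `T` from `s` in the Markov chain induced by `σ`. -/
def prReach (M : CertMDP S A) (σ : M.Strat) (T : Set S) (s : S) : ℝ≥0∞ :=
  ⨆ n, M.prBounded σ T n s

/-- Optimal (min/max over memoryless deterministic strategies) reachability probability. -/
def optPr (M : CertMDP S A) (o : ODir) (T : Set S) (s : S) : ℝ≥0∞ :=
  o.run {p | ∃ σ : M.Strat, p = M.prReach σ T s}

/-- The distance operator `D^opt` on `(ℕ∞)^S`. -/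
def dist (M : CertMDP S A) (o : ODir) (T : Set S) (r : S → ℕ∞) : S → ℕ∞ :=
  fun s => if s ∈ T then 0
    else 1 + o.run ((fun a => sInf (r '' M.Post s a)) '' M.enabled s)

/-- The complementary distance operator `D̃^opt` on `(ℕ∞)^S`, with Iverson bracket. -/
def cdist (M : CertMDP S A) (o : ODir) (T : Set S) (r : S → ℕ∞) : S → ℕ∞ :=
  fun s => if s ∈ T then ⊤
    else o.run ((fun a => sInf (r '' M.Post s a) +
      (if ∃ u ∈ M.Post s a, ∃ v ∈ M.Post s a, r u ≠ r v then 1 else 0)) '' M.enabled s)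

/-- The Bellman operator `Φ^opt` for reachability. -/
def bellman (M : CertMDP S A) (o : ODir) (T : Set S) (x : S → ℝ≥0∞) : S → ℝ≥0∞ :=
  fun s => if s ∈ T then 1
    else o.run ((fun a => ∑ s' : S, M.P s a s' * x s') '' M.enabled s)

/-- The distance operator `D^σ` in the Markov chain induced by strategy `σ`. -/
def distS (M : CertMDP S A) (σ : M.Strat) (T : Set S) (r : S → ℕ∞) : S → ℕ∞ :=
  fun s => if s ∈ T then 0 else 1 + sInf (r '' M.Post s (σ.1 s))

/-- The Bellman operator `Φ^σ` in the Markov chain induced by strategy `σ`. -/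
def bellmanS (M : CertMDP S A) (σ : M.Strat) (T : Set S) (x : S → ℝ≥0∞) : S → ℝ≥0∞ :=
  fun s => if s ∈ T then 1 else ∑ s' : S, M.P s (σ.1 s) s' * x s'

/-- Step-bounded cumulated expected reward (target states absorb with reward 0). -/
def erBounded (M : CertMDP S A) (σ : M.Strat) (T : Set S) (rew : S → ℝ≥0∞) : ℕ → S → ℝ≥0∞
  | 0, _ => 0
  | n + 1, s => if s ∈ T then 0
      else rew s + ∑ s' : S, M.P s (σ.1 s) s' * erBounded M σ T rew n s'

/-- Expected reward accumulated until reaching `T` under `σ`, where paths never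
reaching `T` receive reward `∞` (the `* = ∞` semantics). -/
def expRew (M : CertMDP S A) (σ : M.Strat) (T : Set S) (rew : S → ℝ≥0∞) (s : S) : ℝ≥0∞ :=
  if M.prReach σ T s = 1 then ⨆ n, M.erBounded σ T rew n s else ⊤

/-- Optimal expected reward accumulated until reaching `T`. -/
def optER (M : CertMDP S A) (o : ODir) (T : Set S) (rew : S → ℝ≥0∞) (s : S) : ℝ≥0∞ :=
  o.run {p | ∃ σ : M.Strat, p = M.expRew σ T rew s}

/-- The Bellman operator `E^opt` for expected rewards. -/
def bellmanR (M : CertMDP S A) (o : ODir) (T : Set S) (rew : S → ℝ≥0∞) (x : S → ℝ≥0∞) :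
    S → ℝ≥0∞ :=
  fun s => if s ∈ T then 0
    else rew s + o.run ((fun a => ∑ s' : S, M.P s a s' * x s') '' M.enabled s)

end CertMDP


namespace CertMDPAux

open CertMDP

variable {S A : Type} [Fintype S] [Fintype A]

lemma run_image_mono {α β : Type*} [CompleteLattice β] (o : ODir) {E : Set α} {f g : α → β}
    (h : ∀ a ∈ E, f a ≤ g a) : o.run (f '' E) ≤ o.run (g '' E) := by
  cases o <;> simp only [ODir.run, sInf_image, sSup_image]
  · exact iInf₂_mono h
  · exact iSup₂_mono h

lemma post_nonempty (M : CertMDP S A) {s : S} {a : A} (h : a ∈ M.enabled s) :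
    (M.Post s a).Nonempty := by
  by_contra hne
  rw [Set.not_nonempty_iff_eq_empty] at hne
  have hz : (∑ s' : S, M.P s a s') = 0 := by
    apply Finset.sum_eq_zero
    intro s' _
    by_contra h0
    have : s' ∈ M.Post s a := h0
    simp [hne] at this
  have h1 : (∑ s' : S, M.P s a s') = 1 := h
  rw [hz] at h1
  exact one_ne_zero h1.symm

lemma enabled_nonempty (M : CertMDP S A) (s : S) : (M.enabled s).Nonempty :=
  M.exists_enabled s

lemma dist_mono (M : CertMDP S A) (o : ODir) (T : Set S) : Monotone (M.dist o T) := by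
  intro r r' h s
  unfold CertMDP.dist
  split
  · exact le_rfl
  · apply add_le_add_right
    apply run_image_mono
    intro a _
    simp only [sInf_image]
    exact iInf₂_mono fun s' _ => h s'

/-- Any fixed point is below the least fixed point on states at finite distance. -/
lemma fix_le (M : CertMDP S A) (o : ODir) (T : Set S) {L r : S → ℕ∞}
    (hL : M.dist o T L = L) (hr : M.dist o T r = r) :
    ∀ n : ℕ, ∀ s : S, L s ≤ (n : ℕ∞) → r s ≤ L s := by
  intro n
  induction n with
  | zero =>
    intro s hs
    by_cases hT : s ∈ T
    · have : r s = 0 := by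
        conv_lhs => rw [← hr]
        simp [CertMDP.dist, hT]
      simp [this]
    · exfalso
      have hLs : L s = 1 + o.run ((fun a => sInf (L '' M.Post s a)) '' M.enabled s) := by
        conv_lhs => rw [← hL]
        simp [CertMDP.dist, hT]
      have h1 : (1 : ℕ∞) ≤ L s := by rw [hLs]; exact le_self_add
      have := h1.trans hs
      simp at this
  | succ m ih =>
    intro s hs
    by_cases hT : s ∈ T
    · have : r s = 0 := by
        conv_lhs => rw [← hr]
        simp [CertMDP.dist, hT]
      simp [this]
    · have hLs : L s = 1 + o.run ((fun a => sInf (L '' M.Post s a)) '' M.enabled s) := by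
        conv_lhs => rw [← hL]
        simp [CertMDP.dist, hT]
      have hrs : r s = 1 + o.run ((fun a => sInf (r '' M.Post s a)) '' M.enabled s) := by
        conv_lhs => rw [← hr]
        simp [CertMDP.dist, hT]
      -- Sublemma: if sInf (L '' Post s a) ≤ m for some enabled a, then
      -- sInf (r '' Post s a) ≤ sInf (L '' Post s a).
      have key : ∀ a ∈ M.enabled s, sInf (L '' M.Post s a) ≤ (m : ℕ∞) →
          sInf (r '' M.Post s a) ≤ sInf (L '' M.Post s a) := by
        intro a ha hle
        have hne : (L '' M.Post s a).Nonempty := (post_nonempty M ha).image L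
        have hmem : sInf (L '' M.Post s a) ∈ L '' M.Post s a :=
          hne.csInf_mem (Set.toFinite _)
        obtain ⟨s', hs', hLs'⟩ := hmem
        have hIH : r s' ≤ L s' := ih s' (by rw [hLs']; exact hle)
        calc sInf (r '' M.Post s a) ≤ r s' := sInf_le ⟨s', hs', rfl⟩
          _ ≤ L s' := hIH
          _ = sInf (L '' M.Post s a) := hLs'
      have hV : o.run ((fun a => sInf (L '' M.Post s a)) '' M.enabled s) ≤ (m : ℕ∞) := by
        have : (1 : ℕ∞) + o.run ((fun a => sInf (L '' M.Post s a)) '' M.enabled s)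
            ≤ 1 + (m : ℕ∞) := by
          rw [← hLs]
          have : ((m : ℕ∞) + 1) = 1 + (m : ℕ∞) := by ring
          calc L s ≤ ((m + 1 : ℕ) : ℕ∞) := hs
            _ = 1 + (m : ℕ∞) := by push_cast; ring
        exact (WithTop.add_le_add_iff_left (by simp : (1 : ℕ∞) ≠ ⊤)).mp this
      rw [hLs, hrs]
      apply add_le_add_right
      cases o with
      | dmin =>
        simp only [ODir.run] at hV ⊢
        have hne : ((fun a => sInf (L '' M.Post s a)) '' M.enabled s).Nonempty :=
          (enabled_nonempty M s).image _
        have hmem := hne.csInf_mem (Set.toFinite _)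
        obtain ⟨a, ha, hEq⟩ := hmem
        have hEq' : sInf (L '' M.Post s a)
            = sInf ((fun a => sInf (L '' M.Post s a)) '' M.enabled s) := hEq
        have h1 : sInf (r '' M.Post s a) ≤ sInf (L '' M.Post s a) :=
          key a ha (by rw [hEq']; exact hV)
        have h0 : sInf ((fun a => sInf (r '' M.Post s a)) '' M.enabled s)
            ≤ sInf (r '' M.Post s a) := sInf_le ⟨a, ha, rfl⟩
        exact h0.trans (h1.trans_eq hEq')
      | dmax =>
        simp only [ODir.run] at hV ⊢
        apply sSup_le
        rintro x ⟨a, ha, rfl⟩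
        have hmemL : sInf (L '' M.Post s a)
            ∈ (fun a => sInf (L '' M.Post s a)) '' M.enabled s := ⟨a, ha, rfl⟩
        have hle : sInf (L '' M.Post s a) ≤ (m : ℕ∞) :=
          le_trans (le_sSup hmemL) hV
        exact le_trans (key a ha hle) (le_sSup hmemL)

end CertMDPAux

/-- The distance operator `D^opt` of a finite MDP has a unique fixed point. -/
theorem stmt3 {S A : Type} [Fintype S] [Fintype A] (M : CertMDP S A) (o : ODir) (T : Set S) :
    ∃! r : S → ℕ∞, M.dist o T r = r := by
  have hmono := CertMDPAux.dist_mono M o T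
  set D : (S → ℕ∞) →o (S → ℕ∞) := ⟨M.dist o T, hmono⟩ with hD
  refine ⟨OrderHom.lfp D, OrderHom.map_lfp D, ?_⟩
  intro r hr
  have h1 : OrderHom.lfp D ≤ r := OrderHom.lfp_le D (le_of_eq hr)
  have hLfix : M.dist o T (OrderHom.lfp D) = OrderHom.lfp D := OrderHom.map_lfp D
  have h2 : r ≤ OrderHom.lfp D := by
    intro s
    cases hLs : OrderHom.lfp D s with
    | top => simp [hLs]
    | coe n => exact (CertMDPAux.fix_le M o T hLfix hr n s (le_of_eq hLs)).trans_eq hLs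
  exact le_antisymm h2 h1
end
end

section
/- Let r be the unique fixed point of the distance operator D^opt for a finite MDP with target set T. Then for all states s, r(s) = ∞ if and only if the optimal reachability probability Pr^{¬opt}_s(◇T) = 0, where ¬min = max and ¬max = min. -/
open scoped ENNReal
open Classical

noncomputable section

namespace CertMDP

variable {S A : Type} [Fintype S] [Fintype A]

lemma ENat_lt_one_add {v : ℕ∞} (h : v ≠ ⊤) : v < 1 + v := by
  rw [add_comm]
  exact (ENat.lt_add_one_iff h).mpr le_rfl

lemma ENat_add_eq_top {v : ℕ∞} (h : 1 + v = ⊤) : v = ⊤ :=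
  (WithTop.add_eq_top.mp h).resolve_left ENat.one_ne_top

lemma prReach_eq_zero (M : CertMDP S A) (σ : M.Strat) (T : Set S) (Z : Set S)
    (hZT : ∀ s ∈ Z, s ∉ T)
    (hcl : ∀ s ∈ Z, ∀ s' ∈ M.Post s (σ.1 s), s' ∈ Z) :
    ∀ s ∈ Z, M.prReach σ T s = 0 := by
  have hpb : ∀ n, ∀ s ∈ Z, M.prBounded σ T n s = 0 := by
    intro n
    induction n with
    | zero => intro s hs; simp [prBounded, hZT s hs]
    | succ n ih =>
      intro s hs
      simp only [prBounded, if_neg (hZT s hs)]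
      refine Finset.sum_eq_zero fun s' _ => ?_
      by_cases hp : M.P s (σ.1 s) s' = 0
      · simp [hp]
      · rw [ih s' (hcl s hs s' hp), mul_zero]
  intro s hs
  simp only [prReach, ENNReal.iSup_eq_zero]
  exact fun n => hpb n s hs

lemma prReach_pos (M : CertMDP S A) (σ : M.Strat) (T : Set S) (r : S → ℕ∞)
    (h0 : ∀ s, r s = 0 → s ∈ T)
    (hdec : ∀ s, s ∉ T → r s ≠ ⊤ → ∃ s' ∈ M.Post s (σ.1 s), r s' < r s)
    {s : S} (hs : r s ≠ ⊤) : 0 < M.prReach σ T s := by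
  have key : ∀ n : ℕ, ∀ s, r s ≤ (n : ℕ∞) → 0 < M.prBounded σ T n s := by
    intro n
    induction n with
    | zero =>
      intro s hsn
      have hsT : s ∈ T := h0 s (by simpa using hsn)
      simp [prBounded, hsT]
    | succ n ih =>
      intro s hsn
      by_cases hT : s ∈ T
      · simp [prBounded, hT]
      · have hne : r s ≠ ⊤ := by
          intro h; rw [h, top_le_iff] at hsn; exact ENat.coe_ne_top (n + 1) hsn
        obtain ⟨s', hs', hlt⟩ := hdec s hT hne
        have h2 : r s' < (n : ℕ∞) + 1 := by
          have := lt_of_lt_of_le hlt hsn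
          exact_mod_cast this
        have hle : r s' ≤ (n : ℕ∞) := (ENat.lt_add_one_iff (ENat.coe_ne_top n)).mp h2
        have hpos : 0 < M.P s (σ.1 s) s' * M.prBounded σ T n s' :=
          ENNReal.mul_pos hs' (ih s' hle).ne'
        calc 0 < M.P s (σ.1 s) s' * M.prBounded σ T n s' := hpos
          _ ≤ ∑ t : S, M.P s (σ.1 s) t * M.prBounded σ T n t :=
              Finset.single_le_sum
                (f := fun t => M.P s (σ.1 s) t * M.prBounded σ T n t)
                (fun i _ => zero_le) (Finset.mem_univ s')
          _ = M.prBounded σ T (n + 1) s := by simp [prBounded, hT]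
  obtain ⟨m, hm⟩ : ∃ m : ℕ, r s = (m : ℕ∞) := by
    lift r s to ℕ using hs with m hm
    exact ⟨m, rfl⟩
  have hkey := key m s (le_of_eq hm)
  exact lt_of_lt_of_le hkey (le_iSup (fun n => M.prBounded σ T n s) m)

end CertMDP

/-- If `r` is the (unique) fixed point of `D^opt`, then `r s = ∞` iff
`Pr^{¬opt}_s(◇T) = 0`. -/
theorem stmt4 {S A : Type} [Fintype S] [Fintype A] (M : CertMDP S A) (o : ODir) (T : Set S)
    (r : S → ℕ∞) (hr : M.dist o T r = r) :
    ∀ s, r s = ⊤ ↔ M.optPr o.neg T s = 0 := by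
  classical
  have hT0 : ∀ t ∈ T, r t = 0 := by
    intro t ht; rw [← congrFun hr t]; simp [CertMDP.dist, ht]
  have hfix : ∀ t, t ∉ T →
      r t = 1 + o.run ((fun a => sInf (r '' M.Post t a)) '' M.enabled t) := by
    intro t ht; rw [← congrFun hr t]; simp [CertMDP.dist, ht]
  have h0T : ∀ t, r t = 0 → t ∈ T := by
    intro t h
    by_contra ht
    rw [hfix t ht] at h
    simp [add_eq_zero] at h
  have hZT : ∀ t, r t = ⊤ → t ∉ T := by
    intro t h ht; rw [hT0 t ht] at h; simp at h
  have hStratNe : Nonempty M.Strat :=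
    ⟨⟨fun t => (M.exists_enabled t).choose, fun t => (M.exists_enabled t).choose_spec⟩⟩
  intro s
  cases o with
  | dmin =>
    simp only [ODir.run] at hfix
    constructor
    · intro hs
      show sSup {p | ∃ σ : M.Strat, p = M.prReach σ T s} = 0
      refine le_antisymm (sSup_le ?_) (zero_le)
      rintro p ⟨σ, rfl⟩
      refine le_of_eq (M.prReach_eq_zero σ T {t | r t = ⊤} (fun t ht => hZT t ht) ?_ s hs)
      intro t ht s' hs'
      have h1 := hfix t (hZT t ht)
      rw [show r t = ⊤ from ht] at h1
      have h2 : sInf ((fun a => sInf (r '' M.Post t a)) '' M.enabled t) = ⊤ :=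
        CertMDP.ENat_add_eq_top h1.symm
      have h3 : sInf (r '' M.Post t (σ.1 t)) = ⊤ :=
        sInf_eq_top.mp h2 _ (Set.mem_image_of_mem _ (σ.2 t))
      exact sInf_eq_top.mp h3 _ (Set.mem_image_of_mem r hs')
    · intro hopt
      by_contra hs
      have hch : ∀ t, ∃ a, a ∈ M.enabled t ∧
          (t ∉ T → r t ≠ ⊤ → ∃ s' ∈ M.Post t a, r s' < r t) := by
        intro t
        by_cases ht : t ∉ T ∧ r t ≠ ⊤
        · obtain ⟨ht1, ht2⟩ := ht
          have h1 := hfix t ht1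
          have hvne : sInf ((fun a => sInf (r '' M.Post t a)) '' M.enabled t) ≠ ⊤ := by
            intro h; rw [h1, h, add_top] at ht2; exact ht2 rfl
          have hvlt : sInf ((fun a => sInf (r '' M.Post t a)) '' M.enabled t) < r t := by
            rw [h1]; exact CertMDP.ENat_lt_one_add hvne
          obtain ⟨x, hx, hxlt⟩ := sInf_lt_iff.mp hvlt
          obtain ⟨a, ha, rfl⟩ := hx
          obtain ⟨y, hy, hylt⟩ := sInf_lt_iff.mp hxlt
          obtain ⟨s', hs', rfl⟩ := hy
          exact ⟨a, ha, fun _ _ => ⟨s', hs', hylt⟩⟩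
        · obtain ⟨a, ha⟩ := M.exists_enabled t
          exact ⟨a, ha, fun h1 h2 => absurd ⟨h1, h2⟩ ht⟩
      let σ : M.Strat := ⟨fun t => (hch t).choose, fun t => ((hch t).choose_spec).1⟩
      have hpos := M.prReach_pos σ T r h0T (fun t h1 h2 => ((hch t).choose_spec).2 h1 h2) hs
      have hle : M.prReach σ T s ≤ M.optPr ODir.dmin.neg T s :=
        le_sSup ⟨σ, rfl⟩
      rw [hopt] at hle
      exact hpos.ne' (le_antisymm hle (zero_le))
  | dmax =>
    simp only [ODir.run] at hfix
    constructor
    · intro hs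
      have hch : ∀ t, ∃ a, a ∈ M.enabled t ∧
          (r t = ⊤ → ∀ s' ∈ M.Post t a, r s' = ⊤) := by
        intro t
        by_cases ht : r t = ⊤
        · have ht1 := hZT t ht
          have h1 := hfix t ht1
          rw [ht] at h1
          have h2 : sSup ((fun a => sInf (r '' M.Post t a)) '' M.enabled t) = ⊤ :=
            CertMDP.ENat_add_eq_top h1.symm
          have hene : (M.enabled t).Nonempty :=
            ⟨(M.exists_enabled t).choose, (M.exists_enabled t).choose_spec⟩
          have hne : ((fun a => sInf (r '' M.Post t a)) '' M.enabled t).Nonempty :=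
            hene.image _
          have hfin : ((fun a => sInf (r '' M.Post t a)) '' M.enabled t).Finite :=
            (Set.toFinite (M.enabled t)).image _
          have hmem := hne.csSup_mem hfin
          rw [h2] at hmem
          obtain ⟨a, ha, haeq⟩ := hmem
          exact ⟨a, ha, fun _ s' hs' => sInf_eq_top.mp haeq _ (Set.mem_image_of_mem r hs')⟩
        · obtain ⟨a, ha⟩ := M.exists_enabled t
          exact ⟨a, ha, fun h => absurd h ht⟩
      let σ : M.Strat := ⟨fun t => (hch t).choose, fun t => ((hch t).choose_spec).1⟩
      have h0 : M.prReach σ T s = 0 :=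
        M.prReach_eq_zero σ T {t | r t = ⊤} (fun t ht => hZT t ht)
          (fun t ht s' hs' => ((hch t).choose_spec).2 ht s' hs') s hs
      show sInf {p | ∃ σ : M.Strat, p = M.prReach σ T s} = 0
      exact le_antisymm (h0 ▸ sInf_le ⟨σ, rfl⟩) (zero_le)
    · intro hopt
      by_contra hs
      have hdec : ∀ σ : M.Strat, ∀ t, t ∉ T → r t ≠ ⊤ →
          ∃ s' ∈ M.Post t (σ.1 t), r s' < r t := by
        intro σ t ht1 ht2
        have h1 := hfix t ht1
        have hvne : sSup ((fun a => sInf (r '' M.Post t a)) '' M.enabled t) ≠ ⊤ := by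
          intro h; rw [h1, h, add_top] at ht2; exact ht2 rfl
        have hvlt : sSup ((fun a => sInf (r '' M.Post t a)) '' M.enabled t) < r t := by
          rw [h1]; exact CertMDP.ENat_lt_one_add hvne
        have hle : sInf (r '' M.Post t (σ.1 t)) ≤
            sSup ((fun a => sInf (r '' M.Post t a)) '' M.enabled t) :=
          le_sSup (Set.mem_image_of_mem _ (σ.2 t))
        obtain ⟨y, hy, hylt⟩ := sInf_lt_iff.mp (lt_of_le_of_lt hle hvlt)
        obtain ⟨s', hs', rfl⟩ := hy
        exact ⟨s', hs', hylt⟩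
      have hXfin : {p | ∃ σ : M.Strat, p = M.prReach σ T s}.Finite := by
        have hF : Finite M.Strat := Subtype.finite
        have hEq : {p | ∃ σ : M.Strat, p = M.prReach σ T s} =
            Set.range (fun σ : M.Strat => M.prReach σ T s) := by
          ext p; simp [Set.range, eq_comm]
        rw [hEq]; exact Set.finite_range _
      have hXne : {p | ∃ σ : M.Strat, p = M.prReach σ T s}.Nonempty :=
        ⟨_, hStratNe.some, rfl⟩
      obtain ⟨σ, hσ⟩ := hXne.csInf_mem hXfin
      have hpos := M.prReach_pos σ T r h0T (hdec σ) hs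
      have hopt' : sInf {p | ∃ σ : M.Strat, p = M.prReach σ T s} = 0 := hopt
      rw [hσ] at hopt'
      exact hpos.ne' hopt'
end
end

section
/- If a function r : S → ℕ∞ satisfies D^{¬opt}(r) ≤ r (pointwise), then for every state s with r(s) < ∞ it holds that Pr^{opt}_s(◇T) > 0. -/
open scoped ENNReal
open Classical

noncomputable section

section Aux

variable {S A : Type} [Fintype S] [Fintype A]

lemma aux_strat_nonempty (M : CertMDP S A) : Nonempty M.Strat :=
  ⟨⟨fun s => (M.exists_enabled s).choose, fun s => (M.exists_enabled s).choose_spec⟩⟩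

lemma aux_prBounded_pos (M : CertMDP S A) (σ : M.Strat) (T : Set S) (r : S → ℕ∞)
    (hσ : ∀ s, r s < ⊤ → s ∉ T → ∃ s' ∈ M.Post s (σ.1 s), r s' < r s) :
    ∀ n : ℕ, ∀ s, r s ≤ n → 0 < M.prBounded σ T n s := by
  intro n
  induction n with
  | zero =>
    intro s hs
    by_cases hT : s ∈ T
    · simp [CertMDP.prBounded, hT]
    · exfalso
      obtain ⟨s', _, hlt⟩ := hσ s (lt_of_le_of_lt hs (by simp)) hT
      have : r s = 0 := le_antisymm (by simpa using hs) bot_le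
      simp [this] at hlt
  | succ n ih =>
    intro s hs
    by_cases hT : s ∈ T
    · simp [CertMDP.prBounded, hT]
    · obtain ⟨s', hpost, hlt⟩ := hσ s (lt_of_le_of_lt hs (ENat.coe_lt_top _)) hT
      have hle : r s' ≤ n := by
        have h1 : r s' < (n : ℕ∞) + 1 := lt_of_lt_of_le hlt (by exact_mod_cast hs)
        exact (ENat.lt_add_one_iff (ENat.coe_ne_top n)).mp h1
      have hpos : 0 < M.P s (σ.1 s) s' * M.prBounded σ T n s' := by
        have := ih s' hle
        exact ENNReal.mul_pos hpost (ne_of_gt this)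
      have hsum : M.P s (σ.1 s) s' * M.prBounded σ T n s' ≤
          ∑ t : S, M.P s (σ.1 s) t * M.prBounded σ T n t :=
        Finset.single_le_sum (f := fun t => M.P s (σ.1 s) t * M.prBounded σ T n t)
          (fun t _ => zero_le) (Finset.mem_univ s')
      have : 0 < ∑ t : S, M.P s (σ.1 s) t * M.prBounded σ T n t := lt_of_lt_of_le hpos hsum
      simpa [CertMDP.prBounded, hT] using this

lemma aux_prReach_pos (M : CertMDP S A) (σ : M.Strat) (T : Set S) (r : S → ℕ∞)
    (hσ : ∀ s, r s < ⊤ → s ∉ T → ∃ s' ∈ M.Post s (σ.1 s), r s' < r s)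
    {s : S} (hs : r s < ⊤) : 0 < M.prReach σ T s := by
  obtain ⟨n, hn⟩ := WithTop.ne_top_iff_exists.mp (lt_top_iff_ne_top.mp hs)
  have := aux_prBounded_pos M σ T r hσ n s (le_of_eq hn.symm)
  exact lt_of_lt_of_le this (le_iSup (fun n => M.prBounded σ T n s) n)

lemma aux_step (M : CertMDP S A) (T : Set S) (r : S → ℕ∞) {s : S} {X : ℕ∞}
    (hs : r s < ⊤) (h : 1 + X ≤ r s) : X < r s := by
  have hX : X < ⊤ := lt_of_le_of_lt (le_trans le_add_self h) hs
  have h1 : X < X + 1 := by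
    rw [add_comm] at h
    exact (ENat.lt_add_one_iff (lt_top_iff_ne_top.mp hX)).mpr le_rfl
  calc X < X + 1 := h1
    _ = 1 + X := add_comm _ _
    _ ≤ r s := h

end Aux

/-- If `D^{¬opt}(r) ≤ r` pointwise, then every state with finite rank has positive
optimal reachability probability. -/
theorem stmt5 {S A : Type} [Fintype S] [Fintype A] (M : CertMDP S A) (o : ODir) (T : Set S)
    (r : S → ℕ∞) (hr : M.dist o.neg T r ≤ r) :
    ∀ s, r s < ⊤ → 0 < M.optPr o T s := by
  intro s hs
  cases o with
  | dmax =>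
    -- neg = dmin : the hypothesis gives, at each finite non-target state,
    -- SOME enabled action with a successor of smaller rank.
    have key : ∀ t, r t < ⊤ → t ∉ T →
        ∃ a ∈ M.enabled t, ∃ t' ∈ M.Post t a, r t' < r t := by
      intro t ht hT
      have h := hr t
      simp only [CertMDP.dist, ODir.neg, ODir.run, if_neg hT] at h
      have hlt := aux_step M T r ht h
      obtain ⟨x, hx, hxlt⟩ := sInf_lt_iff.mp hlt
      obtain ⟨a, ha, rfl⟩ := hx
      refine ⟨a, ha, ?_⟩
      obtain ⟨y, hy, hylt⟩ := sInf_lt_iff.mp hxlt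
      obtain ⟨t', ht', rfl⟩ := hy
      exact ⟨t', ht', hylt⟩
    -- construct a strategy choosing a decreasing action when possible
    let pick : ∀ t, {a // a ∈ M.enabled t ∧
        ((r t < ⊤ ∧ t ∉ T) → ∃ t' ∈ M.Post t a, r t' < r t)} := fun t =>
      if h : r t < ⊤ ∧ t ∉ T then
        ⟨(key t h.1 h.2).choose, (key t h.1 h.2).choose_spec.1,
          fun _ => (key t h.1 h.2).choose_spec.2⟩
      else ⟨(M.exists_enabled t).choose, (M.exists_enabled t).choose_spec,
          fun h' => absurd h' h⟩
    let σ : M.Strat := ⟨fun t => (pick t).1, fun t => (pick t).2.1⟩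
    have hσ : ∀ t, r t < ⊤ → t ∉ T → ∃ t' ∈ M.Post t (σ.1 t), r t' < r t :=
      fun t ht hT => (pick t).2.2 ⟨ht, hT⟩
    have hpos := aux_prReach_pos M σ T r hσ hs
    refine lt_of_lt_of_le hpos ?_
    exact le_sSup ⟨σ, rfl⟩
  | dmin =>
    -- neg = dmax : EVERY enabled action has a successor of smaller rank.
    have key : ∀ t, r t < ⊤ → t ∉ T → ∀ a ∈ M.enabled t,
        ∃ t' ∈ M.Post t a, r t' < r t := by
      intro t ht hT a ha
      have h := hr t
      simp only [CertMDP.dist, ODir.neg, ODir.run, if_neg hT] at h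
      have hlt := aux_step M T r ht h
      have hmem : sInf (r '' M.Post t a) ∈
          (fun a => sInf (r '' M.Post t a)) '' M.enabled t := ⟨a, ha, rfl⟩
      have : sInf (r '' M.Post t a) < r t := lt_of_le_of_lt (le_sSup hmem) hlt
      obtain ⟨y, hy, hylt⟩ := sInf_lt_iff.mp this
      obtain ⟨t', ht', rfl⟩ := hy
      exact ⟨t', ht', hylt⟩
    -- every strategy reaches T with positive probability from s
    have hall : ∀ σ : M.Strat, 0 < M.prReach σ T s := by
      intro σ
      exact aux_prReach_pos M σ T r
        (fun t ht hT => key t ht hT (σ.1 t) (σ.2 t)) hs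
    -- the set of reachability values is finite and nonempty, so sInf is attained
    haveI : Finite M.Strat := by unfold CertMDP.Strat; infer_instance
    have hfin : {p | ∃ σ : M.Strat, p = M.prReach σ T s}.Finite := by
      have : {p | ∃ σ : M.Strat, p = M.prReach σ T s} =
          Set.range (fun σ : M.Strat => M.prReach σ T s) := by
        ext p; simp [eq_comm]
      rw [this]
      exact Set.finite_range _
    have hne : {p | ∃ σ : M.Strat, p = M.prReach σ T s}.Nonempty := by
      obtain ⟨σ⟩ := aux_strat_nonempty M
      exact ⟨M.prReach σ T s, σ, rfl⟩
    have hmem := hne.csInf_mem hfin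
    obtain ⟨σ, hσeq⟩ := hmem
    show 0 < sInf {p | ∃ σ : M.Strat, p = M.prReach σ T s}
    rw [hσeq]
    exact hall σ
end
end

section
/- If a function r : S → ℕ∞ satisfies r ≤ D^{¬opt}(r) (pointwise) and r(s) = ∞ for some state s, then Pr^{opt}_s(◇T) = 0. -/
open scoped ENNReal
open Classical

noncomputable section

namespace CertMDP

variable {S A : Type} [Fintype S] [Fintype A]

/-- Any MDP has a strategy. -/
def defaultStrat (M : CertMDP S A) : M.Strat :=
  ⟨fun s => (M.exists_enabled s).choose, fun s => (M.exists_enabled s).choose_spec⟩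

lemma prBounded_zero (M : CertMDP S A) (σ : M.Strat) (T : Set S) (r : S → ℕ∞)
    (h : ∀ s, r s = ⊤ → s ∉ T ∧ ∀ s', M.P s (σ.1 s) s' ≠ 0 → r s' = ⊤) :
    ∀ n s, r s = ⊤ → M.prBounded σ T n s = 0 := by
  intro n
  induction n with
  | zero => intro s hs; simp [prBounded, (h s hs).1]
  | succ n ih =>
    intro s hs
    simp only [prBounded, if_neg (h s hs).1]
    apply Finset.sum_eq_zero
    intro s' _
    by_cases hp : M.P s (σ.1 s) s' = 0
    · simp [hp]
    · rw [ih s' ((h s hs).2 s' hp), mul_zero]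

lemma prReach_zero (M : CertMDP S A) (σ : M.Strat) (T : Set S) (r : S → ℕ∞)
    (h : ∀ s, r s = ⊤ → s ∉ T ∧ ∀ s', M.P s (σ.1 s) s' ≠ 0 → r s' = ⊤)
    (s : S) (hs : r s = ⊤) : M.prReach σ T s = 0 := by
  unfold prReach
  simp only [M.prBounded_zero σ T r h _ s hs, iSup_const]

lemma key_top (M : CertMDP S A) (o : ODir) (T : Set S) (r : S → ℕ∞)
    (hr : r ≤ M.dist o T r) (s : S) (hs : r s = ⊤) :
    s ∉ T ∧ o.run ((fun a => sInf (r '' M.Post s a)) '' M.enabled s) = ⊤ := by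
  have h1 : (⊤ : ℕ∞) ≤ M.dist o T r s := hs ▸ hr s
  have h2 : M.dist o T r s = ⊤ := top_le_iff.mp h1
  unfold dist at h2
  by_cases hT : s ∈ T
  · rw [if_pos hT] at h2; exact absurd h2 (by simp)
  · rw [if_neg hT] at h2
    refine ⟨hT, ?_⟩
    rcases (WithTop.add_eq_top).mp h2 with h | h
    · exact absurd h (by exact ENat.one_ne_top)
    · exact h

lemma sInf_top_post (M : CertMDP S A) (s : S) (a : A) (r : S → ℕ∞)
    (h : sInf (r '' M.Post s a) = ⊤) :
    ∀ s', M.P s a s' ≠ 0 → r s' = ⊤ := by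
  intro s' hp
  exact sInf_eq_top.mp h _ ⟨s', hp, rfl⟩

end CertMDP

/-- If `r ≤ D^{¬opt}(r)` pointwise and `r s = ∞`, then `Pr^{opt}_s(◇T) = 0`. -/
theorem stmt6 {S A : Type} [Fintype S] [Fintype A] (M : CertMDP S A) (o : ODir) (T : Set S)
    (r : S → ℕ∞) (hr : r ≤ M.dist o.neg T r) (s : S) (hs : r s = ⊤) :
    M.optPr o T s = 0 := by
  cases o with
  | dmax =>
    -- o.neg = dmin; every state with r = ⊤ is closed under all actions
    have key : ∀ σ : M.Strat, ∀ t, r t = ⊤ →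
        t ∉ T ∧ ∀ s', M.P t (σ.1 t) s' ≠ 0 → r s' = ⊤ := by
      intro σ t ht
      obtain ⟨hT, hrun⟩ := M.key_top ODir.dmin T r hr t ht
      refine ⟨hT, ?_⟩
      have hinf : sInf (r '' M.Post t (σ.1 t)) = ⊤ := by
        have := sInf_eq_top.mp hrun
        exact this _ ⟨σ.1 t, σ.2 t, rfl⟩
      exact M.sInf_top_post t (σ.1 t) r hinf
    have hall : ∀ σ : M.Strat, M.prReach σ T s = 0 := fun σ =>
      M.prReach_zero σ T r (fun t ht => (key σ t ht)) s hs
    unfold CertMDP.optPr ODir.run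
    refine le_antisymm (sSup_le ?_) zero_le
    rintro p ⟨σ, rfl⟩
    exact le_of_eq (hall σ)
  | dmin =>
    -- o.neg = dmax; for each state with r = ⊤ there is a closed action
    have key : ∀ t, r t = ⊤ →
        t ∉ T ∧ ∃ a ∈ M.enabled t, ∀ s', M.P t a s' ≠ 0 → r s' = ⊤ := by
      intro t ht
      obtain ⟨hT, hrun⟩ := M.key_top ODir.dmax T r hr t ht
      refine ⟨hT, ?_⟩
      have hne : ((fun a => sInf (r '' M.Post t a)) '' M.enabled t).Nonempty :=
        Set.Nonempty.image _ (M.exists_enabled t)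
      have hfin : ((fun a => sInf (r '' M.Post t a)) '' M.enabled t).Finite :=
        Set.Finite.image _ (Set.toFinite _)
      have hmem := Set.Nonempty.csSup_mem hne hfin
      rw [show sSup ((fun a => sInf (r '' M.Post t a)) '' M.enabled t) = ⊤ from hrun] at hmem
      obtain ⟨a, ha, haeq⟩ := hmem
      exact ⟨a, ha, M.sInf_top_post t a r haeq⟩
    -- build a strategy choosing the closed action on r = ⊤ states
    let σ : M.Strat := ⟨fun t => if h : r t = ⊤ then (key t h).2.choose
        else (M.exists_enabled t).choose, by
      intro t
      by_cases h : r t = ⊤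
      · simp only [dif_pos h]; exact (key t h).2.choose_spec.1
      · simp only [dif_neg h]; exact (M.exists_enabled t).choose_spec⟩
    have hcl : ∀ t, r t = ⊤ → t ∉ T ∧ ∀ s', M.P t (σ.1 t) s' ≠ 0 → r s' = ⊤ := by
      intro t ht
      refine ⟨(key t ht).1, ?_⟩
      have : σ.1 t = (key t ht).2.choose := by simp [σ, dif_pos ht]
      rw [this]
      exact (key t ht).2.choose_spec.2
    have h0 : M.prReach σ T s = 0 := M.prReach_zero σ T r hcl s hs
    unfold CertMDP.optPr ODir.run
    refine le_antisymm ?_ zero_le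
    exact sInf_le ⟨σ, h0.symm⟩
end
end

section
/- The complementary distance operator D̃^opt on (ℕ∞)^S, defined by D̃^opt(r)(s) = ∞ for s ∈ T and D̃^opt(r)(s) = opt_{a ∈ A(s)} ( min_{s' ∈ Post(s,a)} r(s') + [∃ u, v ∈ Post(s,a) : r(u) ≠ r(v)] ) for s ∉ T, is monotone. -/
open scoped ENNReal
open Classical

noncomputable section

/-- The complementary distance operator `D̃^opt` is monotone. -/
theorem stmt7 {S A : Type} [Fintype S] [Fintype A] (M : CertMDP S A) (o : ODir) (T : Set S) :
    Monotone (M.cdist o T) := by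
  
  intro r r' h s
  simp only [CertMDP.cdist]
  split
  · exact le_rfl
  · have key : ∀ a, (fun a => sInf (r '' M.Post s a) +
        (if ∃ u ∈ M.Post s a, ∃ v ∈ M.Post s a, r u ≠ r v then 1 else 0)) a ≤
        (fun a => sInf (r' '' M.Post s a) +
        (if ∃ u ∈ M.Post s a, ∃ v ∈ M.Post s a, r' u ≠ r' v then 1 else 0)) a := by
      intro a
      simp only
      have hinf : sInf (r '' M.Post s a) ≤ sInf (r' '' M.Post s a) := by
        apply le_sInf
        rintro b ⟨w, hw, rfl⟩
        exact sInf_le_of_le ⟨w, hw, rfl⟩ (h w)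
      by_cases h2 : ∃ u ∈ M.Post s a, ∃ v ∈ M.Post s a, r' u ≠ r' v
      · simp only [h2, if_pos]
        split
        · exact add_le_add hinf le_rfl
        · exact le_trans (by simp) (add_le_add hinf le_rfl)
      · simp only [h2, if_neg, not_false_iff, add_zero]
        split
        · rename_i h1
          obtain ⟨u, hu, v, hv, huv⟩ := h1
          push_neg at h2
          apply le_sInf
          rintro b ⟨w, hw, rfl⟩
          have h1 : r' w = r' u := h2 w hw u hu
          have h2' : r' w = r' v := h2 w hw v hv
          rcases lt_or_gt_of_ne huv with hlt | hlt
          · calc sInf (r '' M.Post s a) + 1 ≤ r u + 1 :=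
                add_le_add (sInf_le ⟨u, hu, rfl⟩) le_rfl
              _ ≤ r v := Order.add_one_le_of_lt hlt
              _ ≤ r' v := h v
              _ = r' w := h2'.symm
          · calc sInf (r '' M.Post s a) + 1 ≤ r v + 1 :=
                add_le_add (sInf_le ⟨v, hv, rfl⟩) le_rfl
              _ ≤ r u := Order.add_one_le_of_lt hlt
              _ ≤ r' u := h u
              _ = r' w := h1.symm
        · simpa using hinf
    cases o
    · apply le_sInf
      rintro b ⟨a, ha, rfl⟩
      exact sInf_le_of_le ⟨a, ha, rfl⟩ (key a)
    · apply sSup_le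
      rintro b ⟨a, ha, rfl⟩
      exact le_sSup_of_le ⟨a, ha, rfl⟩ (key a)
end
end

section
/- Let r be the least fixed point of the complementary distance operator D̃^opt of a finite MDP with target T. Then for all states s, r(s) = ∞ if and only if Pr^{opt}_s(◇T) = 1. -/
open scoped ENNReal
open Classical

noncomputable section

namespace CertMDPProof

open CertMDP

variable {S A : Type} [Fintype S] [Fintype A]

lemma P_le_one (M : CertMDP S A) (s : S) (a : A) (s' : S) : M.P s a s' ≤ 1 := by
  rcases M.sum_P s a with h | h
  · calc M.P s a s' ≤ ∑ t : S, M.P s a t :=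
        Finset.single_le_sum (fun i _ => zero_le) (Finset.mem_univ s')
      _ = 1 := h
  · have h0 : M.P s a s' = 0 := by
      have := (Finset.sum_eq_zero_iff.mp h) s' (Finset.mem_univ s')
      exact this
    simp [h0]

lemma stratNonempty (M : CertMDP S A) : Nonempty M.Strat :=
  ⟨⟨fun s => Classical.choose (M.exists_enabled s),
    fun s => Classical.choose_spec (M.exists_enabled s)⟩⟩

lemma sum_P_strat (M : CertMDP S A) (σ : M.Strat) (s : S) :
    ∑ s' : S, M.P s (σ.1 s) s' = 1 := σ.2 s

lemma prBounded_le_one (M : CertMDP S A) (σ : M.Strat) (T : Set S) :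
    ∀ n s, M.prBounded σ T n s ≤ 1 := by
  intro n
  induction n with
  | zero => intro s; by_cases hs : s ∈ T <;> simp [prBounded, hs]
  | succ n ih =>
    intro s
    by_cases hs : s ∈ T
    · simp [prBounded, hs]
    · simp only [prBounded, hs, if_false]
      calc ∑ s' : S, M.P s (σ.1 s) s' * M.prBounded σ T n s'
          ≤ ∑ s' : S, M.P s (σ.1 s) s' * 1 :=
            Finset.sum_le_sum fun i _ => mul_le_mul_right (ih i) _
        _ = 1 := by simp [sum_P_strat M σ s]

lemma prBounded_mono (M : CertMDP S A) (σ : M.Strat) (T : Set S) :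
    ∀ n s, M.prBounded σ T n s ≤ M.prBounded σ T (n+1) s := by
  intro n
  induction n with
  | zero =>
    intro s
    by_cases hs : s ∈ T <;> simp [prBounded, hs]
  | succ n ih =>
    intro s
    by_cases hs : s ∈ T
    · simp [prBounded, hs]
    · simp only [prBounded, hs, if_false]
      exact Finset.sum_le_sum fun i _ => mul_le_mul_right (ih i) _

lemma prBounded_mono' (M : CertMDP S A) (σ : M.Strat) (T : Set S) (s : S) :
    Monotone fun n => M.prBounded σ T n s :=
  monotone_nat_of_le_succ fun n => prBounded_mono M σ T n s

lemma prReach_le_one (M : CertMDP S A) (σ : M.Strat) (T : Set S) (s : S) :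
    M.prReach σ T s ≤ 1 :=
  iSup_le fun n => prBounded_le_one M σ T n s

lemma prReach_of_mem (M : CertMDP S A) (σ : M.Strat) (T : Set S) (s : S) (hs : s ∈ T) :
    M.prReach σ T s = 1 := by
  refine le_antisymm (prReach_le_one M σ T s) ?_
  have : M.prBounded σ T 0 s = 1 := by simp [prBounded, hs]
  calc (1:ℝ≥0∞) = M.prBounded σ T 0 s := this.symm
    _ ≤ M.prReach σ T s := le_iSup (fun n => M.prBounded σ T n s) 0

lemma prReach_unfold (M : CertMDP S A) (σ : M.Strat) (T : Set S) (s : S) (hs : s ∉ T) :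
    M.prReach σ T s = ∑ s' : S, M.P s (σ.1 s) s' * M.prReach σ T s' := by
  have h1 : M.prReach σ T s = ⨆ n, M.prBounded σ T (n+1) s := by
    refine le_antisymm (iSup_le fun n => ?_) (iSup_le fun n => ?_)
    · exact le_trans (prBounded_mono M σ T n s)
        (le_iSup (fun n => M.prBounded σ T (n+1) s) n)
    · exact le_iSup (fun n => M.prBounded σ T n s) (n+1)
  rw [h1]
  have h2 : ∀ n, M.prBounded σ T (n+1) s
      = ∑ s' : S, M.P s (σ.1 s) s' * M.prBounded σ T n s' := by
    intro n; simp [prBounded, hs]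
  simp only [h2]
  have hswap := ENNReal.finsetSum_iSup_of_monotone (s := (Finset.univ : Finset S))
    (f := fun s' n => M.P s (σ.1 s) s' * M.prBounded σ T n s')
    (fun s' m n hmn => mul_le_mul_right (prBounded_mono' M σ T s' hmn) _)
  rw [← hswap]
  congr 1
  funext s'
  rw [prReach, ENNReal.mul_iSup]

lemma sum_rigid_one (p g : S → ℝ≥0∞) (hp : ∑ s : S, p s = 1) (hg : ∀ s, g s ≤ 1)
    (h : ∑ s : S, p s * g s = 1) : ∀ s₀, p s₀ ≠ 0 → g s₀ = 1 := by
  intro s₀ hp0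
  have key : (1:ℝ≥0∞) + p s₀ * (1 - g s₀) ≤ 1 + 0 := by
    rw [add_zero]
    calc (1:ℝ≥0∞) + p s₀ * (1 - g s₀)
        = (∑ s : S, p s * g s) + p s₀ * (1 - g s₀) := by rw [h]
      _ = (∑ s ∈ Finset.univ.erase s₀, p s * g s + p s₀ * g s₀) + p s₀ * (1 - g s₀) := by
          rw [Finset.sum_erase_add Finset.univ _ (Finset.mem_univ s₀)]
      _ = ∑ s ∈ Finset.univ.erase s₀, p s * g s + p s₀ * (g s₀ + (1 - g s₀)) := by
          rw [mul_add]; ring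
      _ = ∑ s ∈ Finset.univ.erase s₀, p s * g s + p s₀ * 1 := by
          rw [add_tsub_cancel_of_le (hg s₀)]
      _ ≤ ∑ s ∈ Finset.univ.erase s₀, p s * 1 + p s₀ * 1 := by
          gcongr with i _; exact hg i
      _ = ∑ s ∈ Finset.univ.erase s₀, p s + p s₀ := by simp
      _ = ∑ s : S, p s := Finset.sum_erase_add Finset.univ _ (Finset.mem_univ s₀)
      _ = 1 := hp
  have h0 : p s₀ * (1 - g s₀) = 0 := by
    have := (ENNReal.add_le_add_iff_left (by norm_num : (1:ℝ≥0∞) ≠ ⊤)).mp key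
    exact le_antisymm this zero_le
  rcases mul_eq_zero.mp h0 with h' | h'
  · exact absurd h' hp0
  · exact le_antisymm (hg s₀) (tsub_eq_zero_iff_le.mp h')

lemma sum_rigid_min (p g : S → ℝ≥0∞) (c : ℝ≥0∞) (hp : ∑ s : S, p s = 1) (hc : c ≠ ⊤)
    (h : ∑ s : S, p s * g s = c) (hg : ∀ s, p s ≠ 0 → c ≤ g s) :
    ∀ s₀, p s₀ ≠ 0 → g s₀ = c := by
  intro s₀ hp0
  have hterm : ∀ s, p s * c ≤ p s * g s := by
    intro s
    by_cases hps : p s = 0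
    · simp [hps]
    · exact mul_le_mul_right (hg s hps) _
  have key : c + p s₀ * (g s₀ - c) ≤ c + 0 := by
    rw [add_zero]
    calc c + p s₀ * (g s₀ - c)
        = ∑ s ∈ Finset.univ.erase s₀, p s * c + (p s₀ * c + p s₀ * (g s₀ - c)) := by
          rw [← add_assoc, Finset.sum_erase_add Finset.univ _ (Finset.mem_univ s₀),
            ← Finset.sum_mul, hp, one_mul]
      _ = ∑ s ∈ Finset.univ.erase s₀, p s * c + p s₀ * (c + (g s₀ - c)) := by
          rw [mul_add]
      _ = ∑ s ∈ Finset.univ.erase s₀, p s * c + p s₀ * g s₀ := by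
          rw [add_tsub_cancel_of_le (hg s₀ hp0)]
      _ ≤ ∑ s ∈ Finset.univ.erase s₀, p s * g s + p s₀ * g s₀ :=
          add_le_add_left (Finset.sum_le_sum fun i _ => hterm i) _
      _ = ∑ s : S, p s * g s := Finset.sum_erase_add Finset.univ _ (Finset.mem_univ s₀)
      _ = c := h
  have h0 : p s₀ * (g s₀ - c) = 0 := by
    have := (ENNReal.add_le_add_iff_left hc).mp key
    exact le_antisymm this zero_le
  rcases mul_eq_zero.mp h0 with h' | h'
  · exact absurd h' hp0
  · exact le_antisymm (tsub_eq_zero_iff_le.mp h') (hg s₀ hp0)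

/-- From a state with reach probability 1 (not in T), every successor has reach probability 1. -/
lemma prReach_one_succ (M : CertMDP S A) (σ : M.Strat) (T : Set S) (s : S) (hs : s ∉ T)
    (h1 : M.prReach σ T s = 1) :
    ∀ s', M.P s (σ.1 s) s' ≠ 0 → M.prReach σ T s' = 1 := by
  have hu := prReach_unfold M σ T s hs
  exact sum_rigid_one _ _ (sum_P_strat M σ s) (fun s' => prReach_le_one M σ T s')
    (by rw [← hu, h1])

/-- A σ-closed set avoiding T has reach probability 0. -/
lemma prReach_zero_of_closed (M : CertMDP S A) (σ : M.Strat) (T : Set S) (Q : Set S)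
    (hQT : ∀ s ∈ Q, s ∉ T)
    (hcl : ∀ s ∈ Q, ∀ s', M.P s (σ.1 s) s' ≠ 0 → s' ∈ Q) :
    ∀ s ∈ Q, M.prReach σ T s = 0 := by
  have hb : ∀ n, ∀ s ∈ Q, M.prBounded σ T n s = 0 := by
    intro n
    induction n with
    | zero => intro s hs; simp [prBounded, hQT s hs]
    | succ n ih =>
      intro s hs
      simp only [prBounded, hQT s hs, if_false]
      refine Finset.sum_eq_zero fun s' _ => ?_
      by_cases hP : M.P s (σ.1 s) s' = 0
      · simp [hP]
      · rw [ih s' (hcl s hs s' hP), mul_zero]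
  intro s hs
  rw [prReach]
  simp [fun n => hb n s hs]

/-- Reachability in the graph of σ (stopping at T). -/
def SReach (M : CertMDP S A) (σ : M.Strat) (T : Set S) : S → S → Prop :=
  Relation.ReflTransGen (fun x y => x ∉ T ∧ M.P x (σ.1 x) y ≠ 0)

/-- If V is σ-closed off T and every state of V can σ-reach T, then
reach probability is 1 everywhere on V. -/
lemma prReach_one_of_reach (M : CertMDP S A) (σ : M.Strat) (T : Set S) (V : Set S)
    (hcl : ∀ s ∈ V, s ∉ T → ∀ s', M.P s (σ.1 s) s' ≠ 0 → s' ∈ V)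
    (hre : ∀ s ∈ V, ∃ t ∈ T, SReach M σ T s t) :
    ∀ s ∈ V, M.prReach σ T s = 1 := by
  by_cases hVne : V.Nonempty
  swap
  · intro s hs; exact absurd ⟨s, hs⟩ hVne
  set I : Set ℝ≥0∞ := (fun s => M.prReach σ T s) '' V with hI
  have hIne : I.Nonempty := hVne.image _
  have hIfin : I.Finite := (V.toFinite.image _)
  set c := sInf I with hc
  have hcmem : c ∈ I := hIne.csInf_mem hIfin
  have hcle : ∀ s ∈ V, c ≤ M.prReach σ T s := fun s hs => sInf_le ⟨s, hs, rfl⟩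
  have hc1 : c ≤ 1 := by
    obtain ⟨s, hs, hcs⟩ := hcmem
    rw [← hcs]; exact prReach_le_one M σ T s
  by_cases hceq : c = 1
  · intro s hs
    exact le_antisymm (prReach_le_one M σ T s) (hceq ▸ hcle s hs)
  exfalso
  have hclt : c < 1 := lt_of_le_of_ne hc1 hceq
  set Q : Set S := {s | s ∈ V ∧ M.prReach σ T s = c} with hQ
  have hQT : ∀ s ∈ Q, s ∉ T := by
    intro s hs hsT
    have h2 := hs.2
    rw [prReach_of_mem M σ T s hsT] at h2
    exact hceq h2.symm
  have hQcl : ∀ s ∈ Q, ∀ s', M.P s (σ.1 s) s' ≠ 0 → s' ∈ Q := by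
    intro s hs s' hP
    have hsT := hQT s hs
    have hu := prReach_unfold M σ T s hsT
    have := sum_rigid_min (fun s' => M.P s (σ.1 s) s') (fun s' => M.prReach σ T s') c
      (sum_P_strat M σ s) (by intro h; rw [h] at hclt; exact absurd hclt (by simp))
      (by rw [← hu, hs.2])
      (fun t hPt => hcle t (hcl s hs.1 hsT t hPt)) s' hP
    exact ⟨hcl s hs.1 hsT s' hP, this⟩
  obtain ⟨s₀, hs₀V, hs₀c⟩ := hcmem
  have hs₀Q : s₀ ∈ Q := ⟨hs₀V, hs₀c⟩
  obtain ⟨t, htT, hpath⟩ := hre s₀ hs₀V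
  have hQpath : ∀ x, SReach M σ T s₀ x → x ∈ Q := by
    intro x hx
    induction hx with
    | refl => exact hs₀Q
    | tail _ hstep ih => exact hQcl _ ih _ hstep.2
  have htQ : t ∈ Q := hQpath t hpath
  exact hQT t htQ htT

lemma Post_nonempty (M : CertMDP S A) {s : S} {a : A} (ha : a ∈ M.enabled s) :
    (M.Post s a).Nonempty := by
  have h1 : (∑ s' : S, M.P s a s') ≠ 0 := by rw [ha]; norm_num
  obtain ⟨s', _, hs'⟩ := Finset.exists_ne_zero_of_sum_ne_zero h1
  exact ⟨s', hs'⟩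

lemma enabled_nonempty (M : CertMDP S A) (s : S) : (M.enabled s).Nonempty :=
  M.exists_enabled s

lemma cdist_term_mono (r r' : S → ℕ∞) (h : r ≤ r') (P : Set S) :
    sInf (r '' P) + (if ∃ u ∈ P, ∃ v ∈ P, r u ≠ r v then 1 else 0)
    ≤ sInf (r' '' P) + (if ∃ u ∈ P, ∃ v ∈ P, r' u ≠ r' v then 1 else 0) := by
  have hsInf : sInf (r '' P) ≤ sInf (r' '' P) := by
    refine le_sInf fun b hb => ?_
    obtain ⟨x, hx, rfl⟩ := hb
    exact sInf_le_of_le ⟨x, hx, rfl⟩ (h x)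
  by_cases hbr : ∃ u ∈ P, ∃ v ∈ P, r u ≠ r v
  · by_cases hbr' : ∃ u ∈ P, ∃ v ∈ P, r' u ≠ r' v
    · simp only [hbr, hbr', if_true]
      exact add_le_add_left hsInf 1
    · simp only [hbr, hbr', if_true, if_false, add_zero]
      push_neg at hbr'
      obtain ⟨u, hu, v, hv, huv⟩ := hbr
      have heq : r' u = r' v := hbr' u hu v hv
      rcases lt_or_gt_of_ne huv with hlt | hlt
      · have h1 : sInf (r '' P) < r' v := by
          calc sInf (r '' P) ≤ r u := sInf_le ⟨u, hu, rfl⟩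
            _ < r v := hlt
            _ ≤ r' v := h v
        have h2 : r' v ≤ sInf (r' '' P) := by
          refine le_sInf fun b hb => ?_
          obtain ⟨x, hx, rfl⟩ := hb
          rw [← hbr' v hv x hx]
        exact le_trans (Order.add_one_le_of_lt h1) h2
      · have h1 : sInf (r '' P) < r' u := by
          calc sInf (r '' P) ≤ r v := sInf_le ⟨v, hv, rfl⟩
            _ < r u := hlt
            _ ≤ r' u := h u
        have h2 : r' u ≤ sInf (r' '' P) := by
          refine le_sInf fun b hb => ?_
          obtain ⟨x, hx, rfl⟩ := hb
          rw [hbr' u hu x hx]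
        exact le_trans (Order.add_one_le_of_lt h1) h2
  · simp only [hbr, if_false, add_zero]
    exact le_trans hsInf le_self_add

lemma cdist_mono (M : CertMDP S A) (o : ODir) (T : Set S) :
    Monotone (M.cdist o T) := by
  intro r r' h s
  unfold cdist
  by_cases hs : s ∈ T
  · simp [hs]
  simp only [hs, if_false]
  cases o with
  | dmin =>
    show sInf _ ≤ sInf _
    refine le_sInf fun b hb => ?_
    obtain ⟨a, ha, rfl⟩ := hb
    refine sInf_le_of_le ⟨a, ha, rfl⟩ ?_
    exact cdist_term_mono r r' h (M.Post s a)
  | dmax =>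
    show sSup _ ≤ sSup _
    refine sSup_le fun b hb => ?_
    obtain ⟨a, ha, rfl⟩ := hb
    refine le_sSup_of_le ⟨a, ha, rfl⟩ ?_
    exact cdist_term_mono r r' h (M.Post s a)

lemma lfp_le_prefixed (M : CertMDP S A) (o : ODir) (T : Set S) (r : S → ℕ∞)
    (hleast : ∀ r' : S → ℕ∞, M.cdist o T r' = r' → r ≤ r')
    (r'' : S → ℕ∞) (hpre : M.cdist o T r'' ≤ r'') : r ≤ r'' := by
  set F : (S → ℕ∞) →o (S → ℕ∞) := ⟨M.cdist o T, cdist_mono M o T⟩ with hF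
  calc r ≤ OrderHom.lfp F := hleast _ (F.map_lfp)
    _ ≤ r'' := OrderHom.lfp_le F hpre

lemma fixed_top_on_T (M : CertMDP S A) (o : ODir) (T : Set S) (r : S → ℕ∞)
    (hfp : M.cdist o T r = r) : ∀ s ∈ T, r s = ⊤ := by
  intro s hs
  rw [← congrFun hfp s]
  simp [cdist, hs]

/-- Core soundness: along a strategy compatible with finite ranks, reach probability
is never 1 at finite-rank states. -/
lemma partA_core (M : CertMDP S A) (σ : M.Strat) (T : Set S) (r : S → ℕ∞)
    (hT : ∀ s ∈ T, r s = ⊤)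
    (hσ : ∀ s, s ∉ T → r s ≠ ⊤ →
      sInf (r '' M.Post s (σ.1 s)) +
        (if ∃ u ∈ M.Post s (σ.1 s), ∃ v ∈ M.Post s (σ.1 s), r u ≠ r v then 1 else 0) ≤ r s) :
    ∀ s, r s ≠ ⊤ → M.prReach σ T s ≠ 1 := by
  by_contra hcon
  push_neg at hcon
  obtain ⟨s, hsfin, hs1⟩ := hcon
  set B : Set S := {x | r x ≠ ⊤ ∧ M.prReach σ T x = 1} with hB
  have hBne : B.Nonempty := ⟨s, hsfin, hs1⟩
  have hmem : sInf (r '' B) ∈ r '' B := (hBne.image r).csInf_mem (B.toFinite.image r)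
  set n := sInf (r '' B) with hn
  obtain ⟨s₀, hs₀B, hrs₀⟩ := hmem
  have hntop : n ≠ ⊤ := hrs₀ ▸ hs₀B.1
  have hmin : ∀ x ∈ B, n ≤ r x := fun x hx => sInf_le ⟨x, hx, rfl⟩
  set Q : Set S := {x | r x = n ∧ M.prReach σ T x = 1} with hQ
  have hQT : ∀ x ∈ Q, x ∉ T := by
    intro x hx hxT
    exact hntop (hx.1 ▸ hT x hxT)
  have hQcl : ∀ x ∈ Q, ∀ y, M.P x (σ.1 x) y ≠ 0 → y ∈ Q := by
    intro x hx y hP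
    have hxT := hQT x hx
    have hy1 : M.prReach σ T y = 1 := prReach_one_succ M σ T x hxT hx.2 y hP
    have hineq := hσ x hxT (by rw [hx.1]; exact hntop)
    rw [hx.1] at hineq
    have hyP : y ∈ M.Post x (σ.1 x) := hP
    by_cases hbr : ∃ u ∈ M.Post x (σ.1 x), ∃ v ∈ M.Post x (σ.1 x), r u ≠ r v
    · exfalso
      rw [if_pos hbr] at hineq
      have hPne : (M.Post x (σ.1 x)).Nonempty := ⟨y, hyP⟩
      have hamem : sInf (r '' M.Post x (σ.1 x)) ∈ r '' M.Post x (σ.1 x) :=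
        (hPne.image r).csInf_mem ((M.Post x (σ.1 x)).toFinite.image r)
      obtain ⟨y₀, hy₀P, hy₀⟩ := hamem
      rw [← hy₀] at hineq
      have hy₀top : r y₀ ≠ ⊤ := by
        intro h
        rw [h] at hineq
        exact hntop (top_le_iff.mp (le_trans le_top ((le_add_right le_rfl).trans hineq)))
      have hlt : r y₀ < n := (ENat.add_one_le_iff hy₀top).mp hineq
      have hy₀1 : M.prReach σ T y₀ = 1 := prReach_one_succ M σ T x hxT hx.2 y₀ hy₀P
      have : n ≤ r y₀ := hmin y₀ ⟨ne_top_of_lt hlt, hy₀1⟩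
      exact absurd hlt (not_lt.mpr this)
    · rw [if_neg hbr, add_zero] at hineq
      push_neg at hbr
      have hinfy : sInf (r '' M.Post x (σ.1 x)) = r y := by
        refine le_antisymm (sInf_le ⟨y, hyP, rfl⟩) (le_sInf fun b hb => ?_)
        obtain ⟨z, hz, rfl⟩ := hb
        rw [hbr y hyP z hz]
      rw [hinfy] at hineq
      rcases lt_or_eq_of_le hineq with hlt | heq
      · exact absurd hlt (not_lt.mpr (hmin y ⟨ne_top_of_lt hlt, hy1⟩))
      · exact ⟨heq, hy1⟩
  have hs₀Q : s₀ ∈ Q := ⟨hrs₀, hs₀B.2⟩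
  have := prReach_zero_of_closed M σ T Q hQT hQcl s₀ hs₀Q
  rw [hs₀B.2] at this
  exact one_ne_zero this

lemma partA (M : CertMDP S A) (o : ODir) (T : Set S) (r : S → ℕ∞)
    (hfp : M.cdist o T r = r) : ∀ s, M.optPr o T s = 1 → r s = ⊤ := by
  have hT : ∀ s ∈ T, r s = ⊤ := fixed_top_on_T M o T r hfp
  have hrun : ∀ s, s ∉ T → o.run ((fun a => sInf (r '' M.Post s a) +
      (if ∃ u ∈ M.Post s a, ∃ v ∈ M.Post s a, r u ≠ r v then 1 else 0)) '' M.enabled s)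
      = r s := by
    intro s hs
    conv_rhs => rw [← congrFun hfp s]
    simp [cdist, hs]
  cases o with
  | dmax =>
    intro s hopt
    by_contra hne
    -- every strategy is compatible with the ranks
    have hσall : ∀ σ : M.Strat, ∀ x, x ∉ T → r x ≠ ⊤ →
        sInf (r '' M.Post x (σ.1 x)) +
          (if ∃ u ∈ M.Post x (σ.1 x), ∃ v ∈ M.Post x (σ.1 x), r u ≠ r v then 1 else 0)
          ≤ r x := by
      intro σ x hxT _
      rw [← hrun x hxT]
      exact le_sSup ⟨σ.1 x, σ.2 x, rfl⟩
    -- the sup over (finitely many) strategies is attained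
    have hfinS : Finite M.Strat := Subtype.finite
    have hsetfin : {p | ∃ σ : M.Strat, p = M.prReach σ T s}.Finite := by
      have : {p | ∃ σ : M.Strat, p = M.prReach σ T s}
          = Set.range (fun σ : M.Strat => M.prReach σ T s) := by
        ext p; simp [eq_comm, Set.range]
      rw [this]
      exact Set.finite_range _
    have hsetne : {p | ∃ σ : M.Strat, p = M.prReach σ T s}.Nonempty := by
      obtain ⟨σ⟩ := stratNonempty M
      exact ⟨M.prReach σ T s, σ, rfl⟩
    have hmem : M.optPr ODir.dmax T s ∈ {p | ∃ σ : M.Strat, p = M.prReach σ T s} :=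
      hsetne.csSup_mem hsetfin
    obtain ⟨σ, hσ⟩ := hmem
    have h1 : M.prReach σ T s = 1 := by rw [← hσ, hopt]
    exact partA_core M σ T r hT (hσall σ) s hne h1
  | dmin =>
    intro s hopt
    by_contra hne
    -- construct a strategy picking minimizing actions
    have hex : ∀ x, ∃ a, a ∈ M.enabled x ∧ (x ∉ T → r x ≠ ⊤ →
        sInf (r '' M.Post x a) +
          (if ∃ u ∈ M.Post x a, ∃ v ∈ M.Post x a, r u ≠ r v then 1 else 0) ≤ r x) := by
      intro x
      by_cases hx : x ∉ T ∧ r x ≠ ⊤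
      · have h1 := hrun x hx.1
        have hmem : sInf ((fun a => sInf (r '' M.Post x a) +
            (if ∃ u ∈ M.Post x a, ∃ v ∈ M.Post x a, r u ≠ r v then 1 else 0)) '' M.enabled x)
            ∈ (fun a => sInf (r '' M.Post x a) +
            (if ∃ u ∈ M.Post x a, ∃ v ∈ M.Post x a, r u ≠ r v then 1 else 0)) '' M.enabled x :=
          ((enabled_nonempty M x).image _).csInf_mem ((M.enabled x).toFinite.image _)
        obtain ⟨a, ha, haval⟩ := hmem
        refine ⟨a, ha, fun _ _ => ?_⟩
        exact le_of_eq (haval.trans h1)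
      · obtain ⟨a, ha⟩ := enabled_nonempty M x
        exact ⟨a, ha, fun h1 h2 => absurd ⟨h1, h2⟩ hx⟩
    set σ : M.Strat := ⟨fun x => Classical.choose (hex x),
      fun x => (Classical.choose_spec (hex x)).1⟩ with hσdef
    have hσprop : ∀ x, x ∉ T → r x ≠ ⊤ →
        sInf (r '' M.Post x (σ.1 x)) +
          (if ∃ u ∈ M.Post x (σ.1 x), ∃ v ∈ M.Post x (σ.1 x), r u ≠ r v then 1 else 0)
          ≤ r x := fun x => (Classical.choose_spec (hex x)).2
    have h1 : M.prReach σ T s = 1 := by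
      have hle : M.optPr ODir.dmin T s ≤ M.prReach σ T s := sInf_le ⟨σ, rfl⟩
      rw [hopt] at hle
      exact le_antisymm (prReach_le_one M σ T s) hle
    exact partA_core M σ T r hT hσprop s hne h1

lemma sInf_image_const {f : S → ℕ∞} {P : Set S} {c : ℕ∞} (hne : P.Nonempty)
    (h : ∀ x ∈ P, f x = c) : sInf (f '' P) = c := by
  obtain ⟨z, hz⟩ := hne
  refine le_antisymm (le_trans (sInf_le ⟨z, hz, rfl⟩) (le_of_eq (h z hz))) (le_sInf ?_)
  rintro b ⟨x, hx, rfl⟩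
  exact le_of_eq (h x hx).symm

lemma bracket_ne_top (P : Set S) (f : S → ℕ∞) :
    (if ∃ u ∈ P, ∃ v ∈ P, f u ≠ f v then (1:ℕ∞) else 0) ≠ ⊤ := by
  split_ifs <;> simp

/-- dmin: from an infinite-rank state everything stays infinite-rank, for all actions. -/
lemma top_closed_min (M : CertMDP S A) (T : Set S) (r : S → ℕ∞)
    (hfp : M.cdist ODir.dmin T r = r) :
    ∀ x, r x = ⊤ → x ∉ T → ∀ a ∈ M.enabled x, ∀ y ∈ M.Post x a, r y = ⊤ := by
  intro x hx hxT a ha y hy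
  have heq : sInf ((fun a => sInf (r '' M.Post x a) +
      (if ∃ u ∈ M.Post x a, ∃ v ∈ M.Post x a, r u ≠ r v then 1 else 0)) '' M.enabled x)
      = (⊤:ℕ∞) := by
    rw [← hx]
    conv_rhs => rw [← congrFun hfp x]
    simp [cdist, hxT, ODir.run]
  have hga := sInf_eq_top.mp heq _ ⟨a, ha, rfl⟩
  have hsinf : sInf (r '' M.Post x a) = ⊤ := by
    by_contra hne
    exact WithTop.add_ne_top.mpr ⟨hne, bracket_ne_top _ _⟩ hga
  exact sInf_eq_top.mp hsinf _ ⟨y, hy, rfl⟩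

/-- dmax: from an infinite-rank state some action stays infinite-rank. -/
lemma top_closed_max (M : CertMDP S A) (T : Set S) (r : S → ℕ∞)
    (hfp : M.cdist ODir.dmax T r = r) :
    ∀ x, r x = ⊤ → x ∉ T → ∃ a ∈ M.enabled x, ∀ y ∈ M.Post x a, r y = ⊤ := by
  intro x hx hxT
  have heq : sSup ((fun a => sInf (r '' M.Post x a) +
      (if ∃ u ∈ M.Post x a, ∃ v ∈ M.Post x a, r u ≠ r v then 1 else 0)) '' M.enabled x)
      = (⊤:ℕ∞) := by
    rw [← hx]
    conv_rhs => rw [← congrFun hfp x]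
    simp [cdist, hxT, ODir.run]
  have hmem : sSup ((fun a => sInf (r '' M.Post x a) +
      (if ∃ u ∈ M.Post x a, ∃ v ∈ M.Post x a, r u ≠ r v then 1 else 0)) '' M.enabled x)
      ∈ _ := ((enabled_nonempty M x).image _).csSup_mem ((M.enabled x).toFinite.image _)
  rw [heq] at hmem
  obtain ⟨a, ha, hga⟩ := hmem
  have hga' : sInf (r '' M.Post x a) +
      (if ∃ u ∈ M.Post x a, ∃ v ∈ M.Post x a, r u ≠ r v then (1:ℕ∞) else 0) = ⊤ := hga
  refine ⟨a, ha, fun y hy => ?_⟩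
  have hsinf : sInf (r '' M.Post x a) = ⊤ := by
    by_contra hne
    exact WithTop.add_ne_top.mpr ⟨hne, bracket_ne_top _ _⟩ hga' 
  exact sInf_eq_top.mp hsinf _ ⟨y, hy, rfl⟩

lemma partB_min (M : CertMDP S A) (T : Set S) (r : S → ℕ∞)
    (hfp : M.cdist ODir.dmin T r = r)
    (hleast : ∀ r' : S → ℕ∞, M.cdist ODir.dmin T r' = r' → r ≤ r') :
    ∀ s, r s = ⊤ → M.optPr ODir.dmin T s = 1 := by
  intro s hs
  set V : Set S := {x | r x = ⊤} with hV
  have hsV : s ∈ V := hs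
  have hVcl : ∀ x ∈ V, x ∉ T → ∀ a ∈ M.enabled x, ∀ y ∈ M.Post x a, y ∈ V :=
    fun x hx hxT a ha y hy => top_closed_min M T r hfp x hx hxT a ha y hy
  -- every strategy reaches T almost surely from V
  have hall : ∀ σ : M.Strat, ∀ x ∈ V, M.prReach σ T x = 1 := by
    intro σ
    -- first: from every state of V, T is reachable in the graph of σ
    have hreach : ∀ x ∈ V, ∃ t ∈ T, SReach M σ T x t := by
      by_contra hcon
      push_neg at hcon
      obtain ⟨x₀, hx₀V, hno⟩ := hcon
      set R : Set S := {y | SReach M σ T x₀ y} with hR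
      have hx₀R : x₀ ∈ R := Relation.ReflTransGen.refl
      have hRT : ∀ y ∈ R, y ∉ T := fun y hy hyT => hno y hyT hy
      have hRV : ∀ y ∈ R, y ∈ V := by
        intro y hy
        induction hy with
        | refl => exact hx₀V
        | tail _ hstep ih =>
          exact hVcl _ ih hstep.1 _ (σ.2 _) _ hstep.2
      have hRcl : ∀ y ∈ R, ∀ z ∈ M.Post y (σ.1 y), z ∈ R := by
        intro y hy z hz
        exact Relation.ReflTransGen.tail hy ⟨hRT y hy, hz⟩
      set r'' : S → ℕ∞ := fun y => if y ∈ R then 0 else r y with hr''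
      have hler : r'' ≤ r := by
        intro y
        by_cases hyR : y ∈ R
        · simp only [hr'', if_pos hyR]
          exact zero_le
        · simp [hr'', if_neg hyR]
      have hpre : M.cdist ODir.dmin T r'' ≤ r'' := by
        intro y
        by_cases hyR : y ∈ R
        · have hyT := hRT y hyR
          have h0 : r'' y = 0 := if_pos hyR
          rw [h0]
          show M.cdist ODir.dmin T r'' y ≤ 0
          unfold cdist
          rw [if_neg hyT]
          show sInf _ ≤ 0
          refine sInf_le_of_le ⟨σ.1 y, σ.2 y, rfl⟩ ?_
          show sInf (r'' '' M.Post y (σ.1 y)) +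
            (if ∃ u ∈ M.Post y (σ.1 y), ∃ v ∈ M.Post y (σ.1 y), r'' u ≠ r'' v
              then (1:ℕ∞) else 0) ≤ 0
          have hPsub : ∀ z ∈ M.Post y (σ.1 y), r'' z = 0 := by
            intro z hz
            exact if_pos (hRcl y hyR z hz)
          rw [sInf_image_const (Post_nonempty M (σ.2 y)) hPsub]
          rw [if_neg, add_zero]
          push_neg
          intro u hu v hv
          rw [hPsub u hu, hPsub v hv]
        · have h1 : r'' y = r y := if_neg hyR
          rw [h1]
          calc M.cdist ODir.dmin T r'' y ≤ M.cdist ODir.dmin T r y :=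
              cdist_mono M ODir.dmin T hler y
            _ = r y := congrFun hfp y
      have := lfp_le_prefixed M ODir.dmin T r hleast r'' hpre x₀
      rw [hx₀V, hr''] at this
      simp [hx₀R] at this
    exact prReach_one_of_reach M σ T V
      (fun x hx hxT z hz => hVcl x hx hxT _ (σ.2 x) z hz) hreach
  -- conclude for the infimum
  obtain ⟨σ₀⟩ := stratNonempty M
  refine le_antisymm ?_ ?_
  · refine le_trans (sInf_le ⟨σ₀, rfl⟩) ?_
    exact le_of_eq (hall σ₀ s hsV)
  · refine le_sInf ?_
    rintro b ⟨σ, rfl⟩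
    exact le_of_eq (hall σ s hsV).symm

lemma partB_max (M : CertMDP S A) (T : Set S) (r : S → ℕ∞)
    (hfp : M.cdist ODir.dmax T r = r)
    (hleast : ∀ r' : S → ℕ∞, M.cdist ODir.dmax T r' = r' → r ≤ r') :
    ∀ s, r s = ⊤ → M.optPr ODir.dmax T s = 1 := by
  intro s hs
  set V : Set S := {x | r x = ⊤} with hV
  have hsV : s ∈ V := hs
  have hTV : ∀ t ∈ T, t ∈ V := fun t ht => fixed_top_on_T M ODir.dmax T r hfp t ht
  -- attractor stages within V
  set Y : ℕ → Set S := fun n => Nat.rec T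
    (fun _ Yn => Yn ∪ {x | ∃ a ∈ M.enabled x, M.Post x a ⊆ V ∧ (M.Post x a ∩ Yn).Nonempty}) n
    with hY
  have hY0 : Y 0 = T := rfl
  have hYsucc : ∀ n, Y (n+1) = Y n ∪
      {x | ∃ a ∈ M.enabled x, M.Post x a ⊆ V ∧ (M.Post x a ∩ Y n).Nonempty} := fun n => rfl
  have hYmono : ∀ m n, m ≤ n → Y m ⊆ Y n := by
    intro m n hmn
    induction hmn with
    | refl => exact subset_rfl
    | step h ih => exact ih.trans (by rw [hYsucc]; exact Set.subset_union_left)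
  -- claim: V is contained in the union of the stages
  have hclaim : ∀ x ∈ V, ∃ n, x ∈ Y n := by
    by_contra hcon
    push_neg at hcon
    obtain ⟨x₁, hx₁V, hx₁Y⟩ := hcon
    set G : Set S := {x | x ∈ V ∧ ∀ n, x ∉ Y n} with hG
    have hx₁G : x₁ ∈ G := ⟨hx₁V, hx₁Y⟩
    set Mn : ℕ := Finset.univ.sup (fun x : S => (r x).toNat) with hMn
    have hMnb : ∀ x : S, r x ≠ ⊤ → r x ≤ (Mn : ℕ∞) := by
      intro x hx
      rw [← ENat.coe_toNat hx]
      have h1 : (r x).toNat ≤ Mn := Finset.le_sup (f := fun x : S => (r x).toNat) (Finset.mem_univ x)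
      exact Nat.cast_le.mpr h1
    set C : ℕ∞ := (Mn : ℕ∞) + 1 with hC
    have hCtop : C ≠ ⊤ := by
      rw [hC]
      exact WithTop.add_ne_top.mpr ⟨WithTop.coe_ne_top, (by simp : (1:ℕ∞) ≠ ⊤)⟩
    set r'' : S → ℕ∞ := fun y => if y ∈ G then C else r y with hr''
    have hler : r'' ≤ r := by
      intro y
      by_cases hyG : y ∈ G
      · simp only [hr'', if_pos hyG]
        rw [hyG.1]
        exact le_top
      · simp [hr'', if_neg hyG]
    have hpre : M.cdist ODir.dmax T r'' ≤ r'' := by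
      intro y
      by_cases hyG : y ∈ G
      · have hyT : y ∉ T := fun hyT => hyG.2 0 hyT
        have h0 : r'' y = C := if_pos hyG
        rw [h0]
        show M.cdist ODir.dmax T r'' y ≤ C
        unfold cdist
        rw [if_neg hyT]
        show sSup _ ≤ C
        refine sSup_le ?_
        rintro b ⟨a, ha, rfl⟩
        show sInf (r'' '' M.Post y a) +
          (if ∃ u ∈ M.Post y a, ∃ v ∈ M.Post y a, r'' u ≠ r'' v then (1:ℕ∞) else 0) ≤ C
        by_cases hPV : M.Post y a ⊆ V
        · have hPG : ∀ z ∈ M.Post y a, z ∈ G := by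
            intro z hz
            refine ⟨hPV hz, fun n hzn => ?_⟩
            have : y ∈ Y (n+1) := by
              rw [hYsucc]
              exact Or.inr ⟨a, ha, hPV, ⟨z, hz, hzn⟩⟩
            exact hyG.2 (n+1) this
          have hconst : ∀ z ∈ M.Post y a, r'' z = C := fun z hz => if_pos (hPG z hz)
          rw [sInf_image_const (Post_nonempty M ha) hconst, if_neg, add_zero]
          push_neg
          intro u hu v hv
          rw [hconst u hu, hconst v hv]
        · have hz : ∃ z ∈ M.Post y a, z ∉ V := by
            by_contra h
            push_neg at h
            exact hPV h
          obtain ⟨z, hzP, hzV⟩ := hz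
          have hzG : z ∉ G := fun h => hzV h.1
          have hzr : r'' z = r z := if_neg hzG
          have hle1 : sInf (r'' '' M.Post y a) ≤ (Mn : ℕ∞) := by
            refine le_trans (sInf_le ⟨z, hzP, rfl⟩) ?_
            rw [hzr]
            exact hMnb z hzV
          have hle2 : (if ∃ u ∈ M.Post y a, ∃ v ∈ M.Post y a, r'' u ≠ r'' v
              then (1:ℕ∞) else 0) ≤ 1 := by split_ifs <;> simp
          calc sInf (r'' '' M.Post y a) + _ ≤ (Mn : ℕ∞) + 1 := add_le_add hle1 hle2
            _ = C := rfl
      · have h1 : r'' y = r y := if_neg hyG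
        rw [h1]
        calc M.cdist ODir.dmax T r'' y ≤ M.cdist ODir.dmax T r y :=
            cdist_mono M ODir.dmax T hler y
          _ = r y := congrFun hfp y
    have hfin := lfp_le_prefixed M ODir.dmax T r hleast r'' hpre x₁
    rw [hx₁V] at hfin
    have : r'' x₁ = C := if_pos hx₁G
    rw [this] at hfin
    exact hCtop (top_le_iff.mp hfin)
  -- the attractor strategy
  have hgood : ∀ x, ∃ a, a ∈ M.enabled x ∧ (x ∈ V → x ∉ T →
      (M.Post x a ⊆ V ∧ ∃ m, x ∉ Y m ∧ (M.Post x a ∩ Y m).Nonempty)) := by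
    intro x
    by_cases hx : x ∈ V ∧ x ∉ T
    · obtain ⟨n, hn⟩ := hclaim x hx.1
      have hex' : ∃ m, x ∈ Y m := ⟨n, hn⟩
      have hfind := Nat.find_spec hex'
      have hkpos : Nat.find hex' ≠ 0 := by
        intro h
        rw [h, hY0] at hfind
        exact hx.2 hfind
      obtain ⟨m, hkm⟩ : ∃ m, Nat.find hex' = m + 1 :=
        ⟨Nat.find hex' - 1, (Nat.succ_pred_eq_of_pos (Nat.pos_of_ne_zero hkpos)).symm⟩
      rw [hkm] at hfind
      have hxm : x ∉ Y m := Nat.find_min hex' (by rw [hkm]; exact Nat.lt_succ_self m)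
      have : x ∈ Y m ∪ {z | ∃ a ∈ M.enabled z, M.Post z a ⊆ V ∧ (M.Post z a ∩ Y m).Nonempty} := by
        rw [← hYsucc]; exact hfind
      rcases this with h | h
      · exact absurd h hxm
      · obtain ⟨a, ha, hPV, hne⟩ := h
        exact ⟨a, ha, fun _ _ => ⟨hPV, m, hxm, hne⟩⟩
    · obtain ⟨a, ha⟩ := enabled_nonempty M x
      exact ⟨a, ha, fun h1 h2 => absurd ⟨h1, h2⟩ hx⟩
  set σ : M.Strat := ⟨fun x => Classical.choose (hgood x),
    fun x => (Classical.choose_spec (hgood x)).1⟩ with hσdef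
  have hσspec : ∀ x, x ∈ V → x ∉ T →
      (M.Post x (σ.1 x) ⊆ V ∧ ∃ m, x ∉ Y m ∧ (M.Post x (σ.1 x) ∩ Y m).Nonempty) :=
    fun x => (Classical.choose_spec (hgood x)).2
  have hclosed : ∀ x ∈ V, x ∉ T → ∀ z, M.P x (σ.1 x) z ≠ 0 → z ∈ V := by
    intro x hx hxT z hz
    exact (hσspec x hx hxT).1 hz
  have hreach : ∀ x ∈ V, ∃ t ∈ T, SReach M σ T x t := by
    have key : ∀ N, ∀ x, x ∈ V → x ∈ Y N → ∃ t ∈ T, SReach M σ T x t := by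
      intro N
      induction N using Nat.strong_induction_on with
      | _ N ih =>
        intro x hxV hxY
        by_cases hxT : x ∈ T
        · exact ⟨x, hxT, Relation.ReflTransGen.refl⟩
        · obtain ⟨hPV, m, hxm, z, hzP, hzY⟩ := hσspec x hxV hxT
          have hmN : m < N := by
            by_contra h
            push_neg at h
            exact hxm (hYmono N m h hxY)
          obtain ⟨t, htT, hpath⟩ := ih m hmN z (hPV hzP) hzY
          exact ⟨t, htT, Relation.ReflTransGen.head ⟨hxT, hzP⟩ hpath⟩
    intro x hx
    obtain ⟨n, hn⟩ := hclaim x hx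
    exact key n x hx hn
  have h1 := prReach_one_of_reach M σ T V hclosed hreach s hsV
  refine le_antisymm ?_ ?_
  · refine sSup_le ?_
    rintro b ⟨τ, rfl⟩
    exact prReach_le_one M τ T s
  · rw [← h1]
    exact le_sSup ⟨σ, rfl⟩

end CertMDPProof

/-- If `r` is the least fixed point of the complementary distance operator `D̃^opt`,
then `r s = ∞` iff `Pr^{opt}_s(◇T) = 1`. -/
theorem stmt8 {S A : Type} [Fintype S] [Fintype A] (M : CertMDP S A) (o : ODir) (T : Set S)
    (r : S → ℕ∞) (hfp : M.cdist o T r = r)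
    (hleast : ∀ r' : S → ℕ∞, M.cdist o T r' = r' → r ≤ r') :
    ∀ s, r s = ⊤ ↔ M.optPr o T s = 1 := by
  intro s
  constructor
  · intro h
    cases o with
    | dmin => exact CertMDPProof.partB_min M T r hfp hleast s h
    | dmax => exact CertMDPProof.partB_max M T r hfp hleast s h
  · intro h
    exact CertMDPProof.partA M o T r hfp s h
end
end

section
/- If r : S → ℕ∞ satisfies D̃^opt(r) ≤ r (pointwise), then for every state s with r(s) < ∞ it holds that Pr^{opt}_s(◇T) < 1. -/
open scoped ENNReal
open Classical

noncomputable section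

namespace CertMDPAux

variable {S A : Type} [Fintype S] [Fintype A]

lemma prBounded_le_one (M : CertMDP S A) (σ : M.Strat) (T : Set S) :
    ∀ n s, M.prBounded σ T n s ≤ 1 := by
  intro n
  induction n with
  | zero =>
    intro s
    simp only [CertMDP.prBounded]
    split <;> simp
  | succ n ih =>
    intro s
    simp only [CertMDP.prBounded]
    split
    · exact le_rfl
    · calc (∑ s' : S, M.P s (σ.1 s) s' * M.prBounded σ T n s')
          ≤ ∑ s' : S, M.P s (σ.1 s) s' * 1 :=
            Finset.sum_le_sum (fun s' _ => mul_le_mul_right (ih s') _)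
        _ = ∑ s' : S, M.P s (σ.1 s) s' := by simp
        _ ≤ 1 := by
            rcases M.sum_P s (σ.1 s) with h | h <;> simp [h]

/-- Key quantitative lemma: under a "good for `r`" strategy, the `n`-step
reachability probability of `T` from a finite-rank state is at most
`1 - p ^ rank`. -/
lemma key (M : CertMDP S A) (T : Set S) (r : S → ℕ∞) (p : ℝ≥0∞)
    (hp0 : p ≠ 0) (hp1 : p ≤ 1)
    (hple : ∀ s a s', M.P s a s' ≠ 0 → p ≤ M.P s a s')
    (σ : M.Strat)
    (hgood : ∀ s, r s < ⊤ → s ∉ T ∧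
      sInf (r '' M.Post s (σ.1 s)) +
        (if ∃ u ∈ M.Post s (σ.1 s), ∃ v ∈ M.Post s (σ.1 s), r u ≠ r v then 1 else 0)
        ≤ r s) :
    ∀ n s, r s < ⊤ → M.prBounded σ T n s ≤ 1 - p ^ (r s).toNat := by
  intro n
  induction n with
  | zero =>
    intro s hs
    simp only [CertMDP.prBounded, if_neg (hgood s hs).1]
    exact zero_le
  | succ n ih =>
    intro s hs
    obtain ⟨hsT, hineq⟩ := hgood s hs
    set a := σ.1 s with ha
    have hsum : (∑ s' : S, M.P s a s') = 1 := σ.2 s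
    have hp_top : p ≠ ⊤ := (hp1.trans_lt (by norm_num)).ne
    -- the infimum of ranks of successors is attained
    have hPostne : (M.Post s a).Nonempty := by
      by_contra h
      rw [Set.not_nonempty_iff_eq_empty] at h
      have : (∑ s' : S, M.P s a s') = 0 := by
        apply Finset.sum_eq_zero
        intro s' _
        by_contra hne
        exact absurd (show s' ∈ M.Post s a from hne) (by simp [h])
      rw [hsum] at this; exact one_ne_zero this
    have hne : (r '' M.Post s a).Nonempty := hPostne.image r
    have hmem : sInf (r '' M.Post s a) ∈ r '' M.Post s a :=
      hne.csInf_mem (Set.toFinite _)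
    obtain ⟨u, hu, huinf⟩ := hmem
    simp only [CertMDP.prBounded, if_neg hsT]
    by_cases hdiff : ∃ u ∈ M.Post s a, ∃ v ∈ M.Post s a, r u ≠ r v
    · -- ranks differ: the minimal-rank successor has strictly smaller rank
      rw [if_pos hdiff] at hineq
      have hru1 : r u + 1 ≤ r s := by rw [huinf]; exact hineq
      have hru_top : r u ≠ ⊤ := by
        intro h
        rw [h] at hru1
        exact hs.ne (top_le_iff.mp (le_trans (by simp) hru1))
      have hru_lt : r u < r s := (ENat.add_one_le_iff hru_top).mp hru1
      have htn : (r u).toNat + 1 ≤ (r s).toNat := by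
        obtain ⟨m, hm⟩ : ∃ m : ℕ, r s = m := ⟨_, (ENat.coe_toNat hs.ne).symm⟩
        obtain ⟨mu, hmu⟩ : ∃ m : ℕ, r u = m := ⟨_, (ENat.coe_toNat hru_top).symm⟩
        rw [hm, hmu] at hru1
        simp only [hm, hmu, ENat.toNat_coe]
        exact_mod_cast hru1
      -- it suffices to add `p ^ rank s` and stay below 1
      have hpow_le : p ^ (r s).toNat ≤ M.P s a u * p ^ (r u).toNat := by
        calc p ^ (r s).toNat ≤ p ^ ((r u).toNat + 1) :=
              pow_le_pow_of_le_one zero_le hp1 htn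
          _ = p * p ^ (r u).toNat := by ring
          _ ≤ M.P s a u * p ^ (r u).toNat := mul_le_mul_left (hple s a u hu) _
      have hadd : (∑ s' : S, M.P s a s' * M.prBounded σ T n s') + p ^ (r s).toNat ≤ 1 := by
        rw [← hsum,
          ← Finset.add_sum_erase _ (fun s' => M.P s a s' * M.prBounded σ T n s')
            (Finset.mem_univ u),
          ← Finset.add_sum_erase _ (fun s' => M.P s a s') (Finset.mem_univ u)]
        have h1 : M.P s a u * M.prBounded σ T n u + p ^ (r s).toNat ≤ M.P s a u := by
          calc M.P s a u * M.prBounded σ T n u + p ^ (r s).toNat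
              ≤ M.P s a u * (1 - p ^ (r u).toNat) + M.P s a u * p ^ (r u).toNat := by
                exact add_le_add (mul_le_mul_right (ih u (hru_lt.trans hs)) _) hpow_le
            _ = M.P s a u * ((1 - p ^ (r u).toNat) + p ^ (r u).toNat) := by rw [mul_add]
            _ = M.P s a u := by
                rw [tsub_add_cancel_of_le (pow_le_one' hp1 _), mul_one]
        have h2 : (∑ s' ∈ Finset.univ.erase u, M.P s a s' * M.prBounded σ T n s')
            ≤ ∑ s' ∈ Finset.univ.erase u, M.P s a s' := by
          refine Finset.sum_le_sum fun s' _ => ?_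
          calc M.P s a s' * M.prBounded σ T n s' ≤ M.P s a s' * 1 :=
                mul_le_mul_right (prBounded_le_one M σ T n s') _
            _ = M.P s a s' := mul_one _
        calc M.P s a u * M.prBounded σ T n u +
              (∑ s' ∈ Finset.univ.erase u, M.P s a s' * M.prBounded σ T n s') +
              p ^ (r s).toNat
            = (M.P s a u * M.prBounded σ T n u + p ^ (r s).toNat) +
              (∑ s' ∈ Finset.univ.erase u, M.P s a s' * M.prBounded σ T n s') := by ring
          _ ≤ M.P s a u + ∑ s' ∈ Finset.univ.erase u, M.P s a s' := add_le_add h1 h2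
      exact ENNReal.le_sub_of_add_le_right (ENNReal.pow_ne_top (hp1.trans_lt (by norm_num)).ne) hadd
    · -- all successor ranks are equal
      rw [if_neg hdiff, add_zero, ← huinf] at hineq
      push_neg at hdiff
      have hall : ∀ s' ∈ M.Post s a, r s' ≤ r s := by
        intro s' hs'
        rw [hdiff s' hs' u hu]; exact hineq
      calc (∑ s' : S, M.P s a s' * M.prBounded σ T n s')
          ≤ ∑ s' : S, M.P s a s' * (1 - p ^ (r s).toNat) := by
            refine Finset.sum_le_sum fun s' _ => ?_
            by_cases h0 : M.P s a s' = 0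
            · simp [h0]
            · have hs'post : s' ∈ M.Post s a := h0
              have hle : r s' ≤ r s := hall s' hs'post
              have hlt : r s' < ⊤ := lt_of_le_of_lt hle hs
              have htn' : (r s').toNat ≤ (r s).toNat := by
                obtain ⟨m, hm⟩ : ∃ m : ℕ, r s = m := ⟨_, (ENat.coe_toNat hs.ne).symm⟩
                obtain ⟨mu, hmu⟩ : ∃ m : ℕ, r s' = m := ⟨_, (ENat.coe_toNat hlt.ne).symm⟩
                rw [hm, hmu] at hle
                simp only [hm, hmu, ENat.toNat_coe]
                exact_mod_cast hle
              refine mul_le_mul_right ((ih s' hlt).trans (tsub_le_tsub_left ?_ _)) _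
              exact pow_le_pow_of_le_one zero_le hp1 htn'
        _ = (∑ s' : S, M.P s a s') * (1 - p ^ (r s).toNat) := by
            rw [Finset.sum_mul]
        _ = 1 - p ^ (r s).toNat := by rw [hsum, one_mul]

end CertMDPAux

/-- If `D̃^opt(r) ≤ r` pointwise, then every state with finite rank has optimal
reachability probability strictly below 1. -/
theorem stmt9 {S A : Type} [Fintype S] [Fintype A] (M : CertMDP S A) (o : ODir) (T : Set S)
    (r : S → ℕ∞) (hr : M.cdist o T r ≤ r) :
    ∀ s, r s < ⊤ → M.optPr o T s < 1 := by
  -- minimal nonzero transition probability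
  classical
  set F : Finset ℝ≥0∞ :=
    insert 1 (((Finset.univ : Finset (S × A × S)).image
      (fun x => M.P x.1 x.2.1 x.2.2)).filter (· ≠ 0)) with hF
  have hFne : F.Nonempty := ⟨1, Finset.mem_insert_self _ _⟩
  set p : ℝ≥0∞ := F.min' hFne with hpdef
  have hp_mem : p ∈ F := F.min'_mem hFne
  have hp0 : p ≠ 0 := by
    rcases Finset.mem_insert.mp hp_mem with h | h
    · rw [h]; exact one_ne_zero
    · exact (Finset.mem_filter.mp h).2
  have hp1 : p ≤ 1 := F.min'_le 1 (Finset.mem_insert_self _ _)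
  have hple : ∀ s a s', M.P s a s' ≠ 0 → p ≤ M.P s a s' := by
    intro s a s' h
    refine F.min'_le _ (Finset.mem_insert_of_mem (Finset.mem_filter.mpr ⟨?_, h⟩))
    exact Finset.mem_image.mpr ⟨(s, a, s'), Finset.mem_univ _, rfl⟩
  -- states with finite rank are not in T
  have hnotT : ∀ s, r s < ⊤ → s ∉ T := by
    intro s hs hT
    have := hr s
    rw [CertMDP.cdist, if_pos hT] at this
    exact absurd (top_le_iff.mp this) hs.ne
  -- value of action a at state s
  set val : S → A → ℕ∞ := fun s a => sInf (r '' M.Post s a) +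
      (if ∃ u ∈ M.Post s a, ∃ v ∈ M.Post s a, r u ≠ r v then 1 else 0) with hval
  -- conclude from the key lemma for a good strategy
  have hconc : ∀ (σ : M.Strat),
      (∀ s, r s < ⊤ → val s (σ.1 s) ≤ r s) → ∀ s, r s < ⊤ →
      M.prReach σ T s ≤ 1 - p ^ (r s).toNat := by
    intro σ hσ s hs
    refine iSup_le fun n => ?_
    exact CertMDPAux.key M T r p hp0 hp1 hple σ
      (fun s hs => ⟨hnotT s hs, hσ s hs⟩) n s hs
  have hlt : ∀ s, r s < ⊤ → (1 : ℝ≥0∞) - p ^ (r s).toNat < 1 := by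
    intro s hs
    exact ENNReal.sub_lt_self ENNReal.one_ne_top one_ne_zero (pow_ne_zero _ hp0)
  intro s hs
  cases o with
  | dmax =>
    -- every strategy is good
    have hgood : ∀ (σ : M.Strat) (s : S), r s < ⊤ → val s (σ.1 s) ≤ r s := by
      intro σ s' hs'
      have := hr s'
      rw [CertMDP.cdist, if_neg (hnotT s' hs')] at this
      refine le_trans (le_trans (le_sSup ?_) this) le_rfl
      exact ⟨σ.1 s', σ.2 s', rfl⟩
    refine lt_of_le_of_lt (sSup_le ?_) (hlt s hs)
    rintro x ⟨σ, rfl⟩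
    exact hconc σ (hgood σ) s hs
  | dmin =>
    -- construct a good strategy by choosing a minimizing action
    have hex : ∀ s', ∃ a ∈ M.enabled s', (r s' < ⊤ → val s' a ≤ r s') := by
      intro s'
      by_cases hs' : r s' < ⊤
      · have := hr s'
        rw [CertMDP.cdist, if_neg (hnotT s' hs')] at this
        have himne : ((fun a => val s' a) '' M.enabled s').Nonempty := by
          obtain ⟨a, ha⟩ := M.exists_enabled s'
          exact ⟨val s' a, a, ha, rfl⟩
        have hmem := himne.csInf_mem (Set.toFinite _)
        obtain ⟨a, ha, haeq⟩ := hmem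
        exact ⟨a, ha, fun _ => haeq.le.trans this⟩
      · obtain ⟨a, ha⟩ := M.exists_enabled s'
        exact ⟨a, ha, fun h => absurd h hs'⟩
    choose f hf1 hf2 using hex
    set σ : M.Strat := ⟨f, hf1⟩ with hσ
    have hval_le : M.prReach σ T s ≤ 1 - p ^ (r s).toNat :=
      hconc σ (fun s' hs' => hf2 s' hs') s hs
    refine lt_of_le_of_lt (le_trans (sInf_le ⟨σ, rfl⟩) hval_le) (hlt s hs)
end
end

section
/- Let r be the least fixed point of the complementary distance operator D̃^opt, and let Z = {s | Pr^{opt}_s(◇T) = 0}. Then for all states s, r(s) = 0 if and only if s ∈ Z. -/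
open scoped ENNReal
open Classical

noncomputable section

namespace CertMDP

variable {S A : Type} [Fintype S] [Fintype A] (M : CertMDP S A)

instance : Finite M.Strat := by unfold CertMDP.Strat; exact Subtype.finite

instance : Nonempty M.Strat :=
  ⟨⟨fun s => Classical.choose (M.exists_enabled s),
    fun s => Classical.choose_spec (M.exists_enabled s)⟩⟩

lemma post_nonempty {s : S} {a : A} (ha : a ∈ M.enabled s) : (M.Post s a).Nonempty := by
  by_contra h
  rw [Set.not_nonempty_iff_eq_empty, Set.eq_empty_iff_forall_notMem] at h
  have hz : (∑ s' : S, M.P s a s') = 0 :=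
    Finset.sum_eq_zero fun s' _ => not_not.mp (h s')
  rw [CertMDP.enabled, Set.mem_setOf_eq, hz] at ha
  exact one_ne_zero ha.symm

lemma prReach_eq_zero_iff {σ : M.Strat} {T : Set S} {s : S} :
    M.prReach σ T s = 0 ↔ ∀ n, M.prBounded σ T n s = 0 := by
  constructor
  · intro h n
    have := le_iSup (fun n => M.prBounded σ T n s) n
    rw [← CertMDP.prReach, h] at this
    exact le_antisymm this zero_le
  · intro h
    exact le_antisymm (iSup_le fun n => (h n).le) zero_le

lemma not_mem_T_of_prReach_zero {σ : M.Strat} {T : Set S} {s : S}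
    (h : M.prReach σ T s = 0) : s ∉ T := by
  intro hsT
  have h0 : M.prBounded σ T 0 s = 0 := (M.prReach_eq_zero_iff.mp h) 0
  rw [CertMDP.prBounded, if_pos hsT] at h0
  exact one_ne_zero h0

lemma succ_avoid {σ : M.Strat} {T : Set S} {s : S} (h0 : M.prReach σ T s = 0)
    {s' : S} (hs' : s' ∈ M.Post s (σ.1 s)) : M.prReach σ T s' = 0 := by
  have hsT : s ∉ T := M.not_mem_T_of_prReach_zero h0
  rw [M.prReach_eq_zero_iff] at h0 ⊢
  intro n
  have h1 := h0 (n + 1)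
  rw [CertMDP.prBounded, if_neg hsT] at h1
  have h2 := (Finset.sum_eq_zero_iff.mp h1) s' (Finset.mem_univ _)
  rcases mul_eq_zero.mp h2 with h | h
  · exact absurd h hs'
  · exact h

lemma avoid_lemma {T : Set S} {Z₀ : Set S} (σ : M.Strat)
    (hT : ∀ s ∈ Z₀, s ∉ T) (hcl : ∀ s ∈ Z₀, M.Post s (σ.1 s) ⊆ Z₀) :
    ∀ n, ∀ s ∈ Z₀, M.prBounded σ T n s = 0 := by
  intro n
  induction n with
  | zero => intro s hs; rw [CertMDP.prBounded, if_neg (hT s hs)]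
  | succ n ih =>
    intro s hs
    rw [CertMDP.prBounded, if_neg (hT s hs)]
    refine Finset.sum_eq_zero fun s' _ => ?_
    by_cases hP : M.P s (σ.1 s) s' = 0
    · rw [hP, zero_mul]
    · rw [ih s' (hcl s hs hP), mul_zero]

lemma prReach_zero_of_avoid {T : Set S} {Z₀ : Set S} (σ : M.Strat)
    (hT : ∀ s ∈ Z₀, s ∉ T) (hcl : ∀ s ∈ Z₀, M.Post s (σ.1 s) ⊆ Z₀)
    {s : S} (hs : s ∈ Z₀) : M.prReach σ T s = 0 :=
  M.prReach_eq_zero_iff.mpr fun n => M.avoid_lemma σ hT hcl n s hs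

lemma optPr_ne_zero_of_mem {o : ODir} {T : Set S} {s : S} (hs : s ∈ T) :
    M.optPr o T s ≠ 0 := by
  have key : ∀ σ : M.Strat, (1 : ℝ≥0∞) ≤ M.prReach σ T s := by
    intro σ
    have h0 : M.prBounded σ T 0 s = 1 := by rw [CertMDP.prBounded, if_pos hs]
    have h1 : M.prBounded σ T 0 s ≤ M.prReach σ T s :=
      le_iSup (fun n => M.prBounded σ T n s) 0
    rw [h0] at h1; exact h1
  intro h
  cases o with
  | dmin =>
    have h1 : (1 : ℝ≥0∞) ≤ M.optPr ODir.dmin T s :=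
      le_sInf (by rintro p ⟨σ, rfl⟩; exact key σ)
    rw [h] at h1; exact (not_le_of_gt zero_lt_one) h1
  | dmax =>
    obtain ⟨σ⟩ := (inferInstance : Nonempty M.Strat)
    have h1 : (1 : ℝ≥0∞) ≤ M.optPr ODir.dmax T s :=
      le_trans (key σ) (le_sSup ⟨σ, rfl⟩)
    rw [h] at h1; exact (not_le_of_gt zero_lt_one) h1

lemma optPr_finite {T : Set S} {s : S} :
    {p | ∃ σ : M.Strat, p = M.prReach σ T s}.Finite := by
  have : {p | ∃ σ : M.Strat, p = M.prReach σ T s}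
      = Set.range (fun σ : M.Strat => M.prReach σ T s) := by
    ext p; simp [Set.range, eq_comm]
  rw [this]; exact Set.finite_range _

lemma exists_min_strat {T : Set S} {s : S} (h : M.optPr ODir.dmin T s = 0) :
    ∃ σ : M.Strat, M.prReach σ T s = 0 := by
  have hne : {p | ∃ σ : M.Strat, p = M.prReach σ T s}.Nonempty := by
    obtain ⟨σ⟩ := (inferInstance : Nonempty M.Strat); exact ⟨_, σ, rfl⟩
  have := hne.csInf_mem M.optPr_finite
  simp only [CertMDP.optPr, ODir.run] at h
  rw [h] at this
  obtain ⟨σ, hσ⟩ := this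
  exact ⟨σ, hσ.symm⟩

lemma all_strat_zero {T : Set S} {s : S} (h : M.optPr ODir.dmax T s = 0)
    (σ : M.Strat) : M.prReach σ T s = 0 := by
  simp only [CertMDP.optPr, ODir.run] at h
  have : M.prReach σ T s ≤ 0 := h ▸ le_sSup ⟨σ, rfl⟩
  exact le_antisymm this zero_le

/-- Closure of the max-avoidance set under all enabled actions. -/
lemma Zmax_closed {T : Set S} {s : S} {a : A} {s' : S}
    (h : M.optPr ODir.dmax T s = 0) (ha : a ∈ M.enabled s) (hs' : s' ∈ M.Post s a) :
    M.optPr ODir.dmax T s' = 0 := by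
  classical
  simp only [CertMDP.optPr, ODir.run]
  refine le_antisymm (sSup_le ?_) zero_le
  rintro p ⟨τ, rfl⟩
  have hσv : ∀ w, (fun w => if w = s then a else τ.1 w) w ∈ M.enabled w := by
    intro w; dsimp only; split
    · next hw => subst hw; exact ha
    · exact τ.2 w
  set σ : M.Strat := ⟨fun w => if w = s then a else τ.1 w, hσv⟩ with hσdef
  have hσs : σ.1 s = a := if_pos rfl
  have hσw : ∀ w, w ≠ s → σ.1 w = τ.1 w := fun w hw => if_neg hw
  have hσ0 : M.prReach σ T s = 0 := M.all_strat_zero h σ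
  have hsT : s ∉ T := M.not_mem_T_of_prReach_zero hσ0
  have hσs' : M.prReach σ T s' = 0 := M.succ_avoid hσ0 (by rw [hσs]; exact hs')
  have key : ∀ n, ∀ w, M.prReach σ T w = 0 → M.prBounded τ T n w = 0 := by
    intro n
    induction n with
    | zero =>
      intro w hw
      rw [CertMDP.prBounded, if_neg (M.not_mem_T_of_prReach_zero hw)]
    | succ n ih =>
      intro w hw
      have hwT : w ∉ T := M.not_mem_T_of_prReach_zero hw
      by_cases hws : w = s
      · subst hws
        have h1 : M.prBounded τ T (n + 1) w ≤ M.prReach τ T w :=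
          le_iSup (fun n => M.prBounded τ T n w) (n + 1)
        have hτ0 : M.prReach τ T w = 0 := M.all_strat_zero h τ
        rw [hτ0] at h1
        exact le_antisymm h1 zero_le
      · rw [CertMDP.prBounded, if_neg hwT]
        refine Finset.sum_eq_zero fun u _ => ?_
        by_cases hP : M.P w (τ.1 w) u = 0
        · rw [hP, zero_mul]
        · have hu : u ∈ M.Post w (σ.1 w) := by rw [hσw w hws]; exact hP
          rw [ih u (M.succ_avoid hw hu), mul_zero]
  exact (M.prReach_eq_zero_iff.mpr fun n => key n s' hσs').le

/-- The per-action value in `cdist` is zero when all successors have value zero. -/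
lemma cval_zero {r : S → ℕ∞} {w : S} {a : A} (ha : a ∈ M.enabled w)
    (h : ∀ s' ∈ M.Post w a, r s' = 0) :
    sInf (r '' M.Post w a) +
      (if ∃ u ∈ M.Post w a, ∃ v ∈ M.Post w a, r u ≠ r v then 1 else 0) = 0 := by
  obtain ⟨s₀, hs₀⟩ := M.post_nonempty ha
  have h1 : sInf (r '' M.Post w a) = 0 := by
    refine le_antisymm ?_ zero_le
    have : (0 : ℕ∞) ∈ r '' M.Post w a := ⟨s₀, hs₀, h s₀ hs₀⟩
    exact sInf_le this
  have h2 : ¬∃ u ∈ M.Post w a, ∃ v ∈ M.Post w a, r u ≠ r v := by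
    rintro ⟨u, hu, v, hv, hne⟩
    exact hne ((h u hu).trans (h v hv).symm)
  rw [h1, if_neg h2, add_zero]

/-- Extraction: a zero per-action value forces all successors to value zero. -/
lemma cval_zero_extract {r : S → ℕ∞} {w : S} {a : A} (ha : a ∈ M.enabled w)
    (h : sInf (r '' M.Post w a) +
      (if ∃ u ∈ M.Post w a, ∃ v ∈ M.Post w a, r u ≠ r v then 1 else 0) = 0) :
    ∀ s' ∈ M.Post w a, r s' = 0 := by
  rw [add_eq_zero] at h
  obtain ⟨h1, h2⟩ := h
  have hcond : ¬∃ u ∈ M.Post w a, ∃ v ∈ M.Post w a, r u ≠ r v := by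
    intro hc; rw [if_pos hc] at h2; exact one_ne_zero h2
  push_neg at hcond
  have hne : (r '' M.Post w a).Nonempty := (M.post_nonempty ha).image r
  have hmem := hne.csInf_mem ((M.Post w a).toFinite.image r)
  rw [h1] at hmem
  obtain ⟨s₀, hs₀, hrs₀⟩ := hmem
  intro s' hs'
  rw [hcond s' hs' s₀ hs₀, hrs₀]

/-- Monotonicity of the per-action value. -/
lemma cval_mono {r r' : S → ℕ∞} (h : r ≤ r') (P : Set S) :
    sInf (r '' P) + (if ∃ u ∈ P, ∃ v ∈ P, r u ≠ r v then 1 else 0)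
      ≤ sInf (r' '' P) + (if ∃ u ∈ P, ∃ v ∈ P, r' u ≠ r' v then 1 else 0) := by
  have hinf : sInf (r '' P) ≤ sInf (r' '' P) :=
    le_sInf (by rintro b ⟨u, hu, rfl⟩; exact le_trans (sInf_le ⟨u, hu, rfl⟩) (h u))
  by_cases hr' : ∃ u ∈ P, ∃ v ∈ P, r' u ≠ r' v
  · rw [if_pos hr']
    refine add_le_add hinf ?_
    split
    · exact le_refl _
    · exact zero_le_one
  · rw [if_neg hr', add_zero]
    by_cases hr : ∃ u ∈ P, ∃ v ∈ P, r u ≠ r v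
    · rw [if_pos hr]
      push_neg at hr'
      obtain ⟨u, hu, v, hv, huv⟩ := hr
      -- wlog r u < r v
      have main : ∀ u ∈ P, ∀ v ∈ P, r u < r v → sInf (r '' P) + 1 ≤ sInf (r' '' P) := by
        intro u hu v hv hlt
        have h1 : sInf (r '' P) ≤ r u := sInf_le ⟨u, hu, rfl⟩
        have h2 : r u + 1 ≤ r v := (ENat.add_one_le_iff (ne_top_of_lt hlt)).mpr hlt
        have h3 : r v ≤ r' v := h v
        have h4 : r' v ≤ sInf (r' '' P) :=
          le_sInf (by rintro b ⟨z, hz, rfl⟩; exact (hr' v hv z hz).le)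
        calc sInf (r '' P) + 1 ≤ r u + 1 := add_le_add h1 le_rfl
          _ ≤ r v := h2
          _ ≤ r' v := h3
          _ ≤ sInf (r' '' P) := h4
      rcases lt_or_gt_of_ne huv with hlt | hlt
      · exact main u hu v hv hlt
      · exact main v hv u hu hlt
    · rw [if_neg hr, add_zero]; exact hinf

lemma cdist_mono (o : ODir) (T : Set S) : Monotone (M.cdist o T) := by
  intro r r' hrr s
  rw [CertMDP.cdist, CertMDP.cdist]
  by_cases hsT : s ∈ T
  · rw [if_pos hsT, if_pos hsT]
  · rw [if_neg hsT, if_neg hsT]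
    cases o with
    | dmin =>
      simp only [ODir.run]
      refine le_sInf ?_
      rintro b ⟨a, ha, rfl⟩
      exact le_trans (sInf_le ⟨a, ha, rfl⟩) (cval_mono hrr _)
    | dmax =>
      simp only [ODir.run]
      refine sSup_le ?_
      rintro b ⟨a, ha, rfl⟩
      exact le_trans (cval_mono hrr _) (le_sSup ⟨a, ha, rfl⟩)

end CertMDP

/-- If `r` is the least fixed point of `D̃^opt` and `Z = {s | Pr^{opt}_s(◇T) = 0}`,
then `r s = 0` iff `s ∈ Z`. -/
theorem stmt10 {S A : Type} [Fintype S] [Fintype A] (M : CertMDP S A) (o : ODir) (T : Set S)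
    (r : S → ℕ∞) (hfp : M.cdist o T r = r)
    (hleast : ∀ r' : S → ℕ∞, M.cdist o T r' = r' → r ≤ r') :
    ∀ s, r s = 0 ↔ s ∈ {s | M.optPr o T s = 0} := by
  classical
  have hstep : ∀ w, r w = 0 → w ∉ T := by
    intro w hw hwT
    have heq := congrFun hfp w
    simp only [CertMDP.cdist] at heq
    rw [if_pos hwT, hw] at heq
    exact absurd heq (by simp)
  have hfwd : ∀ w, r w = 0 → M.optPr o T w = 0 := by
    cases o with
    | dmin =>
      have hstep2 : ∀ w, r w = 0 → ∃ a, a ∈ M.enabled w ∧ ∀ s' ∈ M.Post w a, r s' = 0 := by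
        intro w hw
        have hwT := hstep w hw
        have heq := congrFun hfp w
        simp only [CertMDP.cdist] at heq
        rw [if_neg hwT] at heq
        simp only [ODir.run] at heq
        rw [hw] at heq
        have hne : ((fun a => sInf (r '' M.Post w a) +
            (if ∃ u ∈ M.Post w a, ∃ v ∈ M.Post w a, r u ≠ r v then 1 else 0)) ''
              M.enabled w).Nonempty := by
          obtain ⟨a, ha⟩ := M.exists_enabled w
          exact ⟨_, a, ha, rfl⟩
        have hmem := hne.csInf_mem (Set.toFinite _)
        rw [heq] at hmem
        obtain ⟨a, ha, hga⟩ := hmem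
        exact ⟨a, ha, M.cval_zero_extract ha hga⟩
      intro w hw
      let σf : S → A := fun u =>
        if h : r u = 0 then (hstep2 u h).choose else (M.exists_enabled u).choose
      have hσv : ∀ u, σf u ∈ M.enabled u := by
        intro u
        simp only [σf]
        split
        · next h => exact (hstep2 u h).choose_spec.1
        · exact (M.exists_enabled u).choose_spec
      let σ : M.Strat := ⟨σf, hσv⟩
      have hcl : ∀ u ∈ {u | r u = 0}, M.Post u (σ.1 u) ⊆ {u | r u = 0} := by
        intro u hu s' hs'
        have hσu : σ.1 u = (hstep2 u hu).choose := dif_pos hu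
        rw [hσu] at hs'
        exact (hstep2 u hu).choose_spec.2 s' hs'
      have h0 : M.prReach σ T w = 0 :=
        M.prReach_zero_of_avoid σ (fun u hu => hstep u hu) hcl hw
      simp only [CertMDP.optPr, ODir.run]
      exact le_antisymm (le_trans (sInf_le ⟨σ, rfl⟩) h0.le) zero_le
    | dmax =>
      have hstep2 : ∀ w, r w = 0 → ∀ a ∈ M.enabled w, ∀ s' ∈ M.Post w a, r s' = 0 := by
        intro w hw a ha
        have hwT := hstep w hw
        have heq := congrFun hfp w
        simp only [CertMDP.cdist] at heq
        rw [if_neg hwT] at heq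
        simp only [ODir.run] at heq
        rw [hw] at heq
        have hmem : sInf (r '' M.Post w a) +
            (if ∃ u ∈ M.Post w a, ∃ v ∈ M.Post w a, r u ≠ r v then 1 else 0) ∈
            (fun a => sInf (r '' M.Post w a) +
              (if ∃ u ∈ M.Post w a, ∃ v ∈ M.Post w a, r u ≠ r v then 1 else 0)) ''
              M.enabled w := ⟨a, ha, rfl⟩
        have hga := le_sSup hmem
        rw [heq] at hga
        exact M.cval_zero_extract ha (le_antisymm hga zero_le)
      intro w hw
      simp only [CertMDP.optPr, ODir.run]
      refine le_antisymm (sSup_le ?_) zero_le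
      rintro p ⟨τ, rfl⟩
      exact (M.prReach_zero_of_avoid τ (fun u hu => hstep u hu)
        (fun u hu => hstep2 u hu (τ.1 u) (τ.2 u)) hw).le
  have hbwd : ∀ w, M.optPr o T w = 0 → r w = 0 := by
    intro w hw
    set Dop : (S → ℕ∞) →o (S → ℕ∞) := ⟨M.cdist o T, M.cdist_mono o T⟩ with hD
    have hfix : M.cdist o T (OrderHom.lfp Dop) = OrderHom.lfp Dop := OrderHom.map_lfp Dop
    have hler : r ≤ OrderHom.lfp Dop := hleast _ hfix
    have hpre : Dop (fun u => if M.optPr o T u = 0 then 0 else ⊤) ≤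
        (fun u => if M.optPr o T u = 0 then 0 else ⊤) := by
      intro u
      by_cases hu : M.optPr o T u = 0
      · have huT : u ∉ T := fun hT => M.optPr_ne_zero_of_mem hT hu
        have h1 : (if M.optPr o T u = 0 then (0 : ℕ∞) else ⊤) = 0 := if_pos hu
        show M.cdist o T (fun u => if M.optPr o T u = 0 then 0 else ⊤) u ≤
          (if M.optPr o T u = 0 then (0 : ℕ∞) else ⊤)
        rw [h1]
        simp only [CertMDP.cdist]
        rw [if_neg huT]
        cases o with
        | dmin =>
          simp only [ODir.run]
          obtain ⟨σ, hσ⟩ := M.exists_min_strat hu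
          have ha : σ.1 u ∈ M.enabled u := σ.2 u
          have hsucc : ∀ s' ∈ M.Post u (σ.1 u),
              (if M.optPr ODir.dmin T s' = 0 then (0 : ℕ∞) else ⊤) = 0 := by
            intro s' hs'
            have hr1 : M.prReach σ T s' = 0 := M.succ_avoid hσ hs'
            have hr2 : M.optPr ODir.dmin T s' = 0 := by
              simp only [CertMDP.optPr, ODir.run]
              exact le_antisymm (le_trans (sInf_le ⟨σ, rfl⟩) hr1.le) zero_le
            exact if_pos hr2
          exact le_trans (sInf_le ⟨σ.1 u, ha, rfl⟩) (M.cval_zero ha hsucc).le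
        | dmax =>
          simp only [ODir.run]
          refine sSup_le ?_
          rintro p ⟨a, ha, rfl⟩
          have hsucc : ∀ s' ∈ M.Post u a,
              (if M.optPr ODir.dmax T s' = 0 then (0 : ℕ∞) else ⊤) = 0 := fun s' hs' =>
            if_pos (M.Zmax_closed hu ha hs')
          exact (M.cval_zero ha hsucc).le
      · have h1 : (if M.optPr o T u = 0 then (0 : ℕ∞) else ⊤) = ⊤ := if_neg hu
        exact le_top.trans_eq h1.symm
    have hle2 : OrderHom.lfp Dop ≤ (fun u => if M.optPr o T u = 0 then 0 else ⊤) :=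
      OrderHom.lfp_le Dop hpre
    have hle3 := le_trans (hler w) (hle2 w)
    have hle4 : r w ≤ 0 := le_trans hle3 (le_of_eq (if_pos hw))
    exact le_antisymm hle4 zero_le
  exact fun s => ⟨fun h => hfwd s h, fun h => hbwd s h⟩
end
end

section
/- For a finite MDP with target T, the optimal reachability probabilities satisfy Pr^{opt}_s(◇T) = (lfp Φ^opt)(s) for all states s, where Φ^opt is the Bellman operator on [0,1]^S defined by Φ^opt(x)(s) = 1 for s ∈ T and Φ^opt(x)(s) = opt_{a ∈ A(s)} ∑_{s' ∈ Post(s,a)} P(s,a,s')·x(s') otherwise. -/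
open scoped ENNReal
open Classical

noncomputable section

section Helpers

variable {ι : Type*}

private lemma exists_max_on {E : Set ι} (hE : E.Finite) (hne : E.Nonempty)
    (f : ι → ℝ≥0∞) : ∃ a ∈ E, ∀ b ∈ E, f b ≤ f a := by
  exact E.exists_max_image f hE hne

private lemma exists_min_on {E : Set ι} (hE : E.Finite) (hne : E.Nonempty)
    (f : ι → ℝ≥0∞) : ∃ a ∈ E, ∀ b ∈ E, f a ≤ f b := by
  exact E.exists_min_image f hE hne

private lemma sum_sub_sum_le (s : Finset ι) (f g : ι → ℝ≥0∞) :
    ∑ i ∈ s, f i - ∑ i ∈ s, g i ≤ ∑ i ∈ s, (f i - g i) := by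
  rw [tsub_le_iff_right, ← Finset.sum_add_distrib]
  exact Finset.sum_le_sum fun i _ => le_tsub_add

private lemma mul_sub_le' (a b c : ℝ≥0∞) : a * b - a * c ≤ a * (b - c) := by
  rw [tsub_le_iff_right, ← mul_add]
  exact mul_le_mul_right le_tsub_add a

private lemma eq_of_sum_eq {s : Finset ι} {f g : ι → ℝ≥0∞}
    (hle : ∀ i ∈ s, f i ≤ g i) (htop : ∑ i ∈ s, g i ≠ ⊤)
    (hsum : ∑ i ∈ s, f i = ∑ i ∈ s, g i) : ∀ i ∈ s, f i = g i := by
  intro i hi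
  by_contra hne
  have hlt : f i < g i := lt_of_le_of_ne (hle i hi) hne
  have h1 : ∑ j ∈ s.erase i, f j ≤ ∑ j ∈ s.erase i, g j :=
    Finset.sum_le_sum fun j hj => hle j (Finset.mem_of_mem_erase hj)
  have h2 : ∑ j ∈ s.erase i, g j ≠ ⊤ := by
    intro h
    apply htop
    rw [← Finset.add_sum_erase s g hi, h, add_top]
  have : ∑ j ∈ s, f j < ∑ j ∈ s, g j := by
    rw [← Finset.add_sum_erase s f hi, ← Finset.add_sum_erase s g hi]
    calc f i + ∑ j ∈ s.erase i, f j ≤ f i + ∑ j ∈ s.erase i, g j :=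
          add_le_add_right h1 _
      _ < g i + ∑ j ∈ s.erase i, g j := ENNReal.add_lt_add_right h2 hlt
  exact absurd hsum this.ne

end Helpers

namespace CertMDP

variable {S A : Type} [Fintype S] [Fintype A] (M : CertMDP S A)

lemma sum_P_le_one (s : S) (a : A) : ∑ s' : S, M.P s a s' ≤ 1 := by
  rcases M.sum_P s a with h | h <;> simp [h]

lemma P_ne_top (s : S) (a : A) (s' : S) : M.P s a s' ≠ ⊤ := by
  intro h
  have h1 : M.P s a s' ≤ ∑ t : S, M.P s a t :=
    Finset.single_le_sum (fun t _ => zero_le) (Finset.mem_univ s')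
  have := h1.trans (M.sum_P_le_one s a)
  rw [h] at this
  exact absurd this (by simp)

def someStrat : M.Strat :=
  ⟨fun s => (M.exists_enabled s).choose, fun s => (M.exists_enabled s).choose_spec⟩

lemma enabled_nonempty (s : S) : (M.enabled s).Nonempty := M.exists_enabled s

lemma enabled_sum {s : S} {a : A} (ha : a ∈ M.enabled s) : ∑ s' : S, M.P s a s' = 1 := ha

/-! ### Monotonicity -/

lemma bellmanS_mono (σ : M.Strat) (T : Set S) : Monotone (M.bellmanS σ T) := by
  intro x y h s
  unfold bellmanS
  split
  · exact le_rfl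
  · exact Finset.sum_le_sum fun s' _ => mul_le_mul_right (h s') _

lemma bellman_mono (o : ODir) (T : Set S) : Monotone (M.bellman o T) := by
  intro x y h s
  unfold bellman
  split
  · exact le_rfl
  · cases o
    · apply le_sInf
      rintro _ ⟨a, ha, rfl⟩
      exact le_trans (sInf_le ⟨a, ha, rfl⟩)
        (Finset.sum_le_sum fun s' _ => mul_le_mul_right (h s') _)
    · apply sSup_le
      rintro _ ⟨a, ha, rfl⟩
      exact le_trans (Finset.sum_le_sum fun s' _ => mul_le_mul_right (h s') _)
        (le_sSup ⟨a, ha, rfl⟩)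

def bellmanHom (o : ODir) (T : Set S) : (S → ℝ≥0∞) →o (S → ℝ≥0∞) :=
  ⟨M.bellman o T, M.bellman_mono o T⟩

/-! ### prBounded / prReach basics -/

lemma prBounded_of_mem (σ : M.Strat) {T : Set S} {s : S} (hs : s ∈ T) (n : ℕ) :
    M.prBounded σ T n s = 1 := by
  cases n <;> simp [prBounded, hs]

lemma prReach_of_mem (σ : M.Strat) {T : Set S} {s : S} (hs : s ∈ T) :
    M.prReach σ T s = 1 := by
  simp [prReach, M.prBounded_of_mem σ hs]

lemma prBounded_succ (σ : M.Strat) (T : Set S) (n : ℕ) :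
    M.prBounded σ T (n + 1) = M.bellmanS σ T (M.prBounded σ T n) := rfl

lemma prBounded_mono (σ : M.Strat) (T : Set S) : Monotone fun n => M.prBounded σ T n := by
  apply monotone_nat_of_le_succ
  intro n
  induction n with
  | zero =>
    intro s
    by_cases hs : s ∈ T <;> simp [prBounded, hs]
  | succ n ih =>
    rw [prBounded_succ, prBounded_succ]
    exact M.bellmanS_mono σ T ih

lemma prBounded_le_of_prefixed (σ : M.Strat) (T : Set S) {x : S → ℝ≥0∞}
    (hx : M.bellmanS σ T x ≤ x) (n : ℕ) : M.prBounded σ T n ≤ x := by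
  induction n with
  | zero =>
    intro s
    by_cases hs : s ∈ T
    · have := hx s
      unfold bellmanS at this
      rw [if_pos hs] at this
      simpa [prBounded, hs] using this
    · simp [prBounded, hs]
  | succ n ih =>
    rw [prBounded_succ]
    exact le_trans (M.bellmanS_mono σ T ih) hx

lemma prReach_le_of_prefixed (σ : M.Strat) (T : Set S) {x : S → ℝ≥0∞}
    (hx : M.bellmanS σ T x ≤ x) : M.prReach σ T ≤ x := by
  intro s
  exact iSup_le fun n => M.prBounded_le_of_prefixed σ T hx n s

lemma prReach_le_one (σ : M.Strat) (T : Set S) (s : S) : M.prReach σ T s ≤ 1 := by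
  refine M.prReach_le_of_prefixed σ T (x := fun _ => 1) ?_ s
  intro t
  unfold bellmanS
  split
  · exact le_rfl
  · simpa using M.sum_P_le_one t (σ.1 t)

lemma prReach_fixed (σ : M.Strat) (T : Set S) :
    M.bellmanS σ T (M.prReach σ T) = M.prReach σ T := by
  funext s
  by_cases hs : s ∈ T
  · simp [bellmanS, hs, M.prReach_of_mem σ hs]
  · show (if s ∈ T then 1 else ∑ s' : S, M.P s (σ.1 s) s' * M.prReach σ T s') = _
    rw [if_neg hs]
    calc ∑ s' : S, M.P s (σ.1 s) s' * ⨆ n, M.prBounded σ T n s'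
        = ∑ s' : S, ⨆ n, M.P s (σ.1 s) s' * M.prBounded σ T n s' := by
          simp_rw [ENNReal.mul_iSup]
      _ = ⨆ n, ∑ s' : S, M.P s (σ.1 s) s' * M.prBounded σ T n s' :=
          ENNReal.finsetSum_iSup_of_monotone fun s' m n hmn =>
            mul_le_mul_right (M.prBounded_mono σ T hmn s') _
      _ = ⨆ n, M.prBounded σ T (n + 1) s := by
          refine iSup_congr fun n => ?_
          simp [prBounded, hs]
      _ = ⨆ n, M.prBounded σ T n s := by
          apply le_antisymm
          · exact iSup_le fun n => le_iSup (fun n => M.prBounded σ T n s) (n + 1)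
          · exact iSup_le fun n => le_iSup_of_le n (M.prBounded_mono σ T (Nat.le_succ n) s)

/-! ### lfp basics -/

lemma lfp_le_one (o : ODir) (T : Set S) :
    OrderHom.lfp (M.bellmanHom o T) ≤ fun _ => 1 := by
  apply OrderHom.lfp_le
  intro s
  show M.bellman o T (fun _ => 1) s ≤ 1
  unfold bellman
  split
  · exact le_rfl
  · cases o
    · obtain ⟨a, ha⟩ := M.enabled_nonempty s
      refine le_trans (sInf_le ⟨a, ha, rfl⟩) ?_
      simpa using M.sum_P_le_one s a
    · apply sSup_le
      rintro _ ⟨a, ha, rfl⟩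
      simpa using M.sum_P_le_one s a

lemma lfp_fixed (o : ODir) (T : Set S) :
    M.bellman o T (OrderHom.lfp (M.bellmanHom o T)) = OrderHom.lfp (M.bellmanHom o T) :=
  OrderHom.map_lfp (M.bellmanHom o T)

lemma lfp_of_mem (o : ODir) {T : Set S} {s : S} (hs : s ∈ T) :
    OrderHom.lfp (M.bellmanHom o T) s = 1 := by
  conv_lhs => rw [← M.lfp_fixed o T]
  simp [bellman, hs]

/-! ### Comparison between bellman and bellmanS -/

lemma bellman_min_le_bellmanS (σ : M.Strat) (T : Set S) (x : S → ℝ≥0∞) :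
    M.bellman ODir.dmin T x ≤ M.bellmanS σ T x := by
  intro s
  unfold bellman bellmanS
  split
  · exact le_rfl
  · exact sInf_le ⟨σ.1 s, σ.2 s, rfl⟩

lemma bellmanS_le_bellman_max (σ : M.Strat) (T : Set S) (x : S → ℝ≥0∞) :
    M.bellmanS σ T x ≤ M.bellman ODir.dmax T x := by
  intro s
  unfold bellman bellmanS
  split
  · exact le_rfl
  · exact le_sSup ⟨σ.1 s, σ.2 s, rfl⟩

lemma sum_le_bellman_max {T : Set S} {s : S} (hs : s ∉ T) {a : A} (ha : a ∈ M.enabled s)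
    (x : S → ℝ≥0∞) : ∑ s' : S, M.P s a s' * x s' ≤ M.bellman ODir.dmax T x s := by
  unfold bellman
  rw [if_neg hs]
  exact le_sSup ⟨a, ha, rfl⟩

end CertMDP

namespace CertMDP

variable {S A : Type} [Fintype S] [Fintype A] (M : CertMDP S A)

/-! ### The min direction -/

/-- A greedy strategy minimizing the expected value of `x`. -/
def greedyMin (x : S → ℝ≥0∞) : M.Strat :=
  ⟨fun s => (exists_min_on (M.enabled s).toFinite (M.enabled_nonempty s)
      (fun a => ∑ s' : S, M.P s a s' * x s')).choose,
   fun s => (exists_min_on (M.enabled s).toFinite (M.enabled_nonempty s)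
      (fun a => ∑ s' : S, M.P s a s' * x s')).choose_spec.1⟩

lemma greedyMin_spec (x : S → ℝ≥0∞) (s : S) (a : A) (ha : a ∈ M.enabled s) :
    ∑ s' : S, M.P s ((M.greedyMin x).1 s) s' * x s' ≤ ∑ s' : S, M.P s a s' * x s' :=
  (exists_min_on (M.enabled s).toFinite (M.enabled_nonempty s)
      (fun a => ∑ s' : S, M.P s a s' * x s')).choose_spec.2 a ha

lemma greedyMin_prefixed (T : Set S) :
    M.bellmanS (M.greedyMin (OrderHom.lfp (M.bellmanHom ODir.dmin T))) T
      (OrderHom.lfp (M.bellmanHom ODir.dmin T)) ≤ OrderHom.lfp (M.bellmanHom ODir.dmin T) := by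
  set y := OrderHom.lfp (M.bellmanHom ODir.dmin T) with hy
  intro s
  by_cases hs : s ∈ T
  · have h1 : y s = 1 := M.lfp_of_mem ODir.dmin hs
    rw [show M.bellmanS (M.greedyMin y) T y s = 1 from if_pos hs, h1]
  · show (if s ∈ T then 1 else ∑ s' : S, M.P s ((M.greedyMin y).1 s) s' * y s') ≤ y s
    rw [if_neg hs]
    have hfix : M.bellman ODir.dmin T y s = y s := congrFun (M.lfp_fixed ODir.dmin T) s
    unfold bellman at hfix
    rw [if_neg hs] at hfix
    rw [← hfix]
    apply le_sInf
    rintro _ ⟨a, ha, rfl⟩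
    exact M.greedyMin_spec y s a ha

lemma optPr_eq_lfp_min (T : Set S) :
    M.optPr ODir.dmin T = OrderHom.lfp (M.bellmanHom ODir.dmin T) := by
  set y := OrderHom.lfp (M.bellmanHom ODir.dmin T) with hy
  funext s
  show sInf {p | ∃ σ : M.Strat, p = M.prReach σ T s} = y s
  apply le_antisymm
  · refine le_trans (sInf_le ⟨M.greedyMin y, rfl⟩) ?_
    exact M.prReach_le_of_prefixed _ T (M.greedyMin_prefixed T) s
  · apply le_sInf
    rintro _ ⟨σ, rfl⟩
    refine OrderHom.lfp_le (M.bellmanHom ODir.dmin T) ?_ s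
    show M.bellman ODir.dmin T (M.prReach σ T) ≤ M.prReach σ T
    exact le_trans (M.bellman_min_le_bellmanS σ T _) (le_of_eq (M.prReach_fixed σ T))

/-! ### The max direction: easy half -/

lemma optPr_max_le_lfp (T : Set S) :
    M.optPr ODir.dmax T ≤ OrderHom.lfp (M.bellmanHom ODir.dmax T) := by
  intro s
  apply sSup_le
  rintro _ ⟨σ, rfl⟩
  refine le_trans ?_ (le_rfl : OrderHom.lfp (M.bellmanHom ODir.dmax T) s ≤ _)
  refine M.prReach_le_of_prefixed σ T ?_ s
  calc M.bellmanS σ T (OrderHom.lfp (M.bellmanHom ODir.dmax T))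
      ≤ M.bellman ODir.dmax T (OrderHom.lfp (M.bellmanHom ODir.dmax T)) :=
        M.bellmanS_le_bellman_max σ T _
    _ = OrderHom.lfp (M.bellmanHom ODir.dmax T) := M.lfp_fixed ODir.dmax T

end CertMDP

namespace CertMDP

variable {S A : Type} [Fintype S] [Fintype A] (M : CertMDP S A)

/-- The least fixed point of the maximizing Bellman operator. -/
def ymax (T : Set S) : S → ℝ≥0∞ := OrderHom.lfp (M.bellmanHom ODir.dmax T)

lemma ymax_fixed (T : Set S) : M.bellman ODir.dmax T (M.ymax T) = M.ymax T :=
  M.lfp_fixed ODir.dmax T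

lemma ymax_le_one (T : Set S) (s : S) : M.ymax T s ≤ 1 := M.lfp_le_one ODir.dmax T s

lemma ymax_of_mem (T : Set S) {s : S} (hs : s ∈ T) : M.ymax T s = 1 :=
  M.lfp_of_mem ODir.dmax hs

lemma ymax_ne_top (T : Set S) (s : S) : M.ymax T s ≠ ⊤ :=
  ((M.ymax_le_one T s).trans_lt (by norm_num)).ne

lemma sum_le_ymax {T : Set S} {s : S} (hs : s ∉ T) {a : A} (ha : a ∈ M.enabled s) :
    ∑ t : S, M.P s a t * M.ymax T t ≤ M.ymax T s := by
  have := M.sum_le_bellman_max hs ha (M.ymax T)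
  rwa [M.ymax_fixed T] at this

end CertMDP

/-- A path to the target using only actions that are optimal for `ymax`. -/
inductive CertMDP.OptPath {S A : Type} [Fintype S] [Fintype A] (M : CertMDP S A) (T : Set S) :
    S → ℕ → Prop
  | base {s : S} : s ∈ T → CertMDP.OptPath M T s 0
  | step {s s' : S} {a : A} {n : ℕ} : s ∉ T → a ∈ M.enabled s →
      (∑ t : S, M.P s a t * M.ymax T t) = M.ymax T s → M.P s a s' ≠ 0 →
      CertMDP.OptPath M T s' n → CertMDP.OptPath M T s (n + 1)

namespace CertMDP

variable {S A : Type} [Fintype S] [Fintype A] (M : CertMDP S A)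

lemma good_of_pos (T : Set S) : ∀ s : S, M.ymax T s ≠ 0 → ∃ n, OptPath M T s n := by
  by_contra hcon
  push_neg at hcon
  obtain ⟨s₀, hs₀y, hs₀g⟩ := hcon
  set B : Set S := {s | (¬ ∃ n, OptPath M T s n) ∧ M.ymax T s ≠ 0} with hB
  have hBne : B.Nonempty := ⟨s₀, fun h => hs₀g h.choose h.choose_spec, hs₀y⟩
  obtain ⟨s₁, hs₁B, hs₁max⟩ := exists_max_on B.toFinite hBne (M.ymax T)
  set m := M.ymax T s₁ with hm
  have hm0 : m ≠ 0 := hs₁B.2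
  have hmtop : m ≠ ⊤ := M.ymax_ne_top T s₁
  set C : Set S := {s | (¬ ∃ n, OptPath M T s n) ∧ M.ymax T s = m} with hC
  have hs₁C : s₁ ∈ C := ⟨hs₁B.1, rfl⟩
  have hCT : ∀ s ∈ C, s ∉ T := fun s hsC hsT => hsC.1 ⟨0, OptPath.base hsT⟩
  have hclosed : ∀ s ∈ C, ∀ a ∈ M.enabled s,
      (∑ t : S, M.P s a t * M.ymax T t) = M.ymax T s → ∀ s', M.P s a s' ≠ 0 → s' ∈ C := by
    intro s hsC a ha hopt s' hP
    have hngAll : ∀ t, M.P s a t ≠ 0 → ¬ ∃ n, OptPath M T t n := fun t hPt ht =>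
      hsC.1 ⟨ht.choose + 1, OptPath.step (hCT s hsC) ha hopt hPt ht.choose_spec⟩
    have hle : ∀ t : S, M.P s a t * M.ymax T t ≤ M.P s a t * m := by
      intro t
      by_cases h0 : M.P s a t = 0
      · simp [h0]
      by_cases hy0 : M.ymax T t = 0
      · simp [hy0]
      exact mul_le_mul_right (hs₁max t ⟨hngAll t h0, hy0⟩) _
    have hconst : ∑ t : S, M.P s a t * m = m := by
      rw [← Finset.sum_mul, M.enabled_sum ha, one_mul]
    have hsum_eq : ∑ t : S, M.P s a t * M.ymax T t = ∑ t : S, M.P s a t * m := by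
      rw [hconst, hopt, hsC.2]
    have heq := eq_of_sum_eq (fun t _ => hle t) (by rw [hconst]; exact hmtop) hsum_eq s'
      (Finset.mem_univ s')
    have hy' : M.ymax T s' = m := (ENNReal.mul_right_inj hP (M.P_ne_top s a s')).mp heq
    exact ⟨hngAll s' hP, hy'⟩
  set c : ℝ≥0∞ := Finset.sup Finset.univ (fun p : S × A =>
    if p.1 ∈ C ∧ p.2 ∈ M.enabled p.1 ∧ (∑ t : S, M.P p.1 p.2 t * M.ymax T t) ≠ M.ymax T p.1
    then ∑ t : S, M.P p.1 p.2 t * M.ymax T t else 0) with hc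
  have hcm : c < m := by
    rw [hc]
    refine (Finset.sup_lt_iff (pos_iff_ne_zero.mpr hm0)).mpr ?_
    rintro ⟨s, a⟩ -
    dsimp only
    split
    · rename_i h
      obtain ⟨hsC, ha, hne⟩ := h
      have hle : ∑ t : S, M.P s a t * M.ymax T t ≤ m := by
        have := M.sum_le_ymax (hCT s hsC) ha
        rwa [hsC.2] at this
      refine lt_of_le_of_ne hle ?_
      rw [hsC.2] at hne; exact hne
    · exact pos_iff_ne_zero.mpr hm0
  set x : S → ℝ≥0∞ := fun s => if s ∈ C then c else M.ymax T s with hx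
  have hxley : x ≤ M.ymax T := by
    intro s
    rw [hx]; dsimp only
    split
    · rename_i h; rw [h.2]; exact hcm.le
    · exact le_rfl
  have hpre : M.bellman ODir.dmax T x ≤ x := by
    intro s
    by_cases hsT : s ∈ T
    · have hsC : s ∉ C := fun h => hCT s h hsT
      show (if s ∈ T then (1:ℝ≥0∞) else _) ≤ x s
      rw [if_pos hsT, hx]; dsimp only
      rw [if_neg hsC, M.ymax_of_mem T hsT]
    · by_cases hsC : s ∈ C
      · show (if s ∈ T then (1:ℝ≥0∞) else _) ≤ x s
        rw [if_neg hsT]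
        apply sSup_le
        rintro _ ⟨a, ha, rfl⟩
        have hxc : x s = c := by rw [hx]; dsimp only; rw [if_pos hsC]
        by_cases hopt : (∑ t : S, M.P s a t * M.ymax T t) = M.ymax T s
        · have hterm : ∀ t : S, M.P s a t * x t = M.P s a t * c := by
            intro t
            by_cases h0 : M.P s a t = 0
            · simp [h0]
            · have htC := hclosed s hsC a ha hopt t h0
              rw [hx]; dsimp only; rw [if_pos htC]
          calc ∑ t : S, M.P s a t * x t = ∑ t : S, M.P s a t * c :=
                Finset.sum_congr rfl fun t _ => hterm t
            _ = c := by rw [← Finset.sum_mul, M.enabled_sum ha, one_mul]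
            _ ≤ x s := le_of_eq hxc.symm
        · have h1 : ∑ t : S, M.P s a t * x t ≤ ∑ t : S, M.P s a t * M.ymax T t :=
            Finset.sum_le_sum fun t _ => mul_le_mul_right (hxley t) _
          have h2 : ∑ t : S, M.P s a t * M.ymax T t ≤ c := by
            rw [hc]
            refine le_trans ?_ (Finset.le_sup (Finset.mem_univ (s, a)))
            rw [if_pos ⟨hsC, ha, hopt⟩]
          rw [hxc]
          exact h1.trans h2
      · calc M.bellman ODir.dmax T x s ≤ M.bellman ODir.dmax T (M.ymax T) s :=
              M.bellman_mono _ _ hxley s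
          _ = M.ymax T s := congrFun (M.ymax_fixed T) s
          _ = x s := by rw [hx]; dsimp only; rw [if_neg hsC]
  have hcontra : M.ymax T ≤ x := OrderHom.lfp_le _ hpre
  have hfin : m ≤ c := by
    have := hcontra s₁
    rw [hx] at this; dsimp only at this
    rwa [if_pos hs₁C] at this
  exact absurd hfin hcm.not_ge

/-- Distance to the target along optimal actions. -/
def dOpt (T : Set S) (s : S) : ℕ := sInf {n | OptPath M T s n}

lemma optPath_dOpt {T : Set S} {s : S} (h : ∃ n, OptPath M T s n) :
    OptPath M T s (M.dOpt T s) := Nat.sInf_mem h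

lemma exists_good_action {T : Set S} {s : S} (hs : s ∉ T) (hg : ∃ n, OptPath M T s n) :
    ∃ a, a ∈ M.enabled s ∧ (∑ t : S, M.P s a t * M.ymax T t) = M.ymax T s ∧
      ∃ s', M.P s a s' ≠ 0 ∧ (∃ n, OptPath M T s' n) ∧ M.dOpt T s' < M.dOpt T s := by
  have h := M.optPath_dOpt hg
  generalize hd : M.dOpt T s = d at h
  cases h with
  | base hmem => exact absurd hmem hs
  | step h1 h2 h3 h4 h5 =>
    rename_i s' a n
    exact ⟨a, h2, h3, s', h4, ⟨n, h5⟩, lt_of_le_of_lt (Nat.sInf_le h5) (Nat.lt_succ_self n)⟩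

/-- The optimal strategy: follow optimal actions that decrease the distance to the target. -/
def sigmaStar (T : Set S) : M.Strat :=
  ⟨fun s => if h : s ∉ T ∧ ∃ n, OptPath M T s n
      then (M.exists_good_action h.1 h.2).choose else M.someStrat.1 s,
   fun s => by
    dsimp only
    split
    · rename_i h
      exact (M.exists_good_action h.1 h.2).choose_spec.1
    · exact M.someStrat.2 s⟩

lemma sigmaStar_spec {T : Set S} {s : S} (hs : s ∉ T) (hg : ∃ n, OptPath M T s n) :
    (∑ t : S, M.P s ((M.sigmaStar T).1 s) t * M.ymax T t) = M.ymax T s ∧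
      ∃ s', M.P s ((M.sigmaStar T).1 s) s' ≠ 0 ∧ M.dOpt T s' < M.dOpt T s := by
  have hcond : s ∉ T ∧ ∃ n, OptPath M T s n := ⟨hs, hg⟩
  have heq : (M.sigmaStar T).1 s = (M.exists_good_action hcond.1 hcond.2).choose := by
    show (if h : s ∉ T ∧ ∃ n, OptPath M T s n
      then (M.exists_good_action h.1 h.2).choose else M.someStrat.1 s) = _
    rw [dif_pos hcond]
  rw [heq]
  obtain ⟨h2, h3, s', h4, -, h5⟩ := (M.exists_good_action hcond.1 hcond.2).choose_spec
  exact ⟨h3, s', h4, h5⟩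

lemma ymax_le_prReach_sigmaStar (T : Set S) :
    M.ymax T ≤ M.prReach (M.sigmaStar T) T := by
  set σ := M.sigmaStar T with hσ
  set pr := M.prReach σ T with hpr
  by_contra hcon
  have hex : ∃ s, pr s < M.ymax T s := by
    by_contra h
    push_neg at h
    exact hcon fun s => le_of_not_gt fun hlt => absurd (h s) (not_le.mpr hlt)
  obtain ⟨sw, hsw⟩ := hex
  set gap : S → ℝ≥0∞ := fun s => M.ymax T s - pr s with hgap
  obtain ⟨s₁, -, hs₁max⟩ := exists_max_on (Set.finite_univ (α := S)) ⟨sw, trivial⟩ gap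
  set m := gap s₁ with hm
  have hm0 : m ≠ 0 := by
    have : 0 < gap sw := tsub_pos_of_lt hsw
    exact (this.trans_le (hs₁max sw trivial)).ne'
  have hmle1 : m ≤ 1 := le_trans (tsub_le_self) (M.ymax_le_one T s₁)
  have hmtop : m ≠ ⊤ := (hmle1.trans_lt (by norm_num)).ne
  -- properties of maximal-gap states
  have hWprop : ∀ s, gap s = m → s ∉ T ∧ (∃ n, OptPath M T s n) := by
    intro s hsm
    have hgap0 : (0:ℝ≥0∞) < gap s := by rw [hsm]; exact pos_iff_ne_zero.mpr hm0
    have hlt : pr s < M.ymax T s := tsub_pos_iff_lt.mp hgap0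
    have hsT : s ∉ T := by
      intro hsT
      have h1 : pr s = 1 := by rw [hpr]; exact M.prReach_of_mem σ hsT
      rw [M.ymax_of_mem T hsT, h1] at hlt
      exact lt_irrefl 1 hlt
    have hy0 : M.ymax T s ≠ 0 := by
      intro h0
      rw [h0] at hlt
      exact absurd hlt (by simp)
    exact ⟨hsT, M.good_of_pos T s hy0⟩
  -- pick a maximal-gap state of minimal distance
  set N : Set ℕ := {n | ∃ s, gap s = m ∧ M.dOpt T s = n} with hN
  have hNne : N.Nonempty := ⟨M.dOpt T s₁, s₁, rfl, rfl⟩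
  obtain ⟨s₀, hs₀m, hs₀d⟩ := Nat.sInf_mem hNne
  obtain ⟨hs₀T, hs₀g⟩ := hWprop s₀ hs₀m
  obtain ⟨hopt, s'₀, hP, hd⟩ := M.sigmaStar_spec hs₀T hs₀g
  -- fixed point equations at s₀
  have hprfix : pr s₀ = ∑ t : S, M.P s₀ (σ.1 s₀) t * pr t := by
    conv_lhs => rw [hpr, ← M.prReach_fixed σ T]
    show (if s₀ ∈ T then 1 else _) = _
    rw [if_neg hs₀T]
  have hsum1 : ∑ t : S, M.P s₀ (σ.1 s₀) t = 1 := M.enabled_sum (σ.2 s₀)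
  have hconst : ∑ t : S, M.P s₀ (σ.1 s₀) t * m = m := by
    rw [← Finset.sum_mul, hsum1, one_mul]
  have hgaple : ∀ t : S, M.P s₀ (σ.1 s₀) t * gap t ≤ M.P s₀ (σ.1 s₀) t * m :=
    fun t => mul_le_mul_right (hs₁max t trivial) _
  have hmlesum : m ≤ ∑ t : S, M.P s₀ (σ.1 s₀) t * gap t := by
    calc m = gap s₀ := hs₀m.symm
      _ = M.ymax T s₀ - pr s₀ := rfl
      _ = (∑ t : S, M.P s₀ (σ.1 s₀) t * M.ymax T t) - ∑ t : S, M.P s₀ (σ.1 s₀) t * pr t := by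
          rw [hopt, ← hprfix]
      _ ≤ ∑ t : S, (M.P s₀ (σ.1 s₀) t * M.ymax T t - M.P s₀ (σ.1 s₀) t * pr t) :=
          sum_sub_sum_le _ _ _
      _ ≤ ∑ t : S, M.P s₀ (σ.1 s₀) t * gap t :=
          Finset.sum_le_sum fun t _ => mul_sub_le' _ _ _
  have hsumeq : ∑ t : S, M.P s₀ (σ.1 s₀) t * gap t = ∑ t : S, M.P s₀ (σ.1 s₀) t * m := by
    apply le_antisymm (Finset.sum_le_sum fun t _ => hgaple t)
    rw [hconst]
    exact hmlesum
  have heq := eq_of_sum_eq (fun t _ => hgaple t) (by rw [hconst]; exact hmtop) hsumeq s'₀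
    (Finset.mem_univ s'₀)
  have hgap' : gap s'₀ = m :=
    (ENNReal.mul_right_inj hP (M.P_ne_top s₀ (σ.1 s₀) s'₀)).mp heq
  have : sInf N ≤ M.dOpt T s'₀ := Nat.sInf_le ⟨s'₀, hgap', rfl⟩
  rw [← hs₀d] at this
  exact absurd hd (not_lt.mpr this)

end CertMDP

namespace CertMDP

variable {S A : Type} [Fintype S] [Fintype A] (M : CertMDP S A)

lemma optPr_eq_lfp_max (T : Set S) :
    M.optPr ODir.dmax T = OrderHom.lfp (M.bellmanHom ODir.dmax T) := by
  apply le_antisymm (M.optPr_max_le_lfp T)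
  intro s
  refine le_trans (M.ymax_le_prReach_sigmaStar T s) ?_
  exact le_sSup ⟨M.sigmaStar T, rfl⟩

lemma optPr_eq_lfp (o : ODir) (T : Set S) :
    M.optPr o T = OrderHom.lfp (M.bellmanHom o T) := by
  cases o
  · exact M.optPr_eq_lfp_min T
  · exact M.optPr_eq_lfp_max T

end CertMDP


/-- The optimal reachability probabilities are the least fixed point of the Bellman
operator `Φ^opt` on `[0,1]^S`. -/
theorem stmt11 {S A : Type} [Fintype S] [Fintype A] (M : CertMDP S A) (o : ODir) (T : Set S) :
    M.bellman o T (M.optPr o T) = M.optPr o T ∧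
    ∀ x : S → ℝ≥0∞, (∀ s, x s ≤ 1) → M.bellman o T x = x → M.optPr o T ≤ x := by
  rw [M.optPr_eq_lfp o T]
  constructor
  · exact M.lfp_fixed o T
  · intro x _ hfix
    exact OrderHom.lfp_le (M.bellmanHom o T) (le_of_eq hfix)
end
end
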